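/- arXiv:2006.02429 — 10 statements merged into one kernel-verified Lean document; each statement's English description precedes it below -/
import Mathlib

section
/- Let G be an abelian group and let S, T be nonempty subsets of G with S + T = G. If S is countable and every element of G can be written as s + t with s ∈ S, t ∈ T in only finitely many ways, then some nonempty subset of S is a minimal complement to T (i.e., there is a nonempty S₀ ⊆ S with S₀ + T = G and (S₀ \ {s}) + T ≠ G for every s ∈ S₀). -/
/-!
Enumerate `S = {f 0, f 1, …}` and prune it greedily: at step `n` discard `f n` whenever the
remaining set is still a complement to `T`. Every stage is a complement, and so is their
intersection `S₀`, because each `g` has only finitely many representations `s + t`, so one of them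
survives all stages. `S₀` is minimal: if `S₀ \ {f k}` were a complement, then so would be the
larger set left at stage `k` minus `f k`, and `f k` would have been discarded there.
-/

open Pointwise Set Filter

section GreedyPrune

variable {α : Type*} (P : Set α → Prop) (f : ℕ → α) (S : Set α)

open Classical in
noncomputable def greedyPrune : ℕ → Set α
  | 0 => S
  | n + 1 => if P (greedyPrune n \ {f n}) then greedyPrune n \ {f n} else greedyPrune n

theorem greedyPrune_succ_subset (n : ℕ) : greedyPrune P f S (n + 1) ⊆ greedyPrune P f S n := by
  rw [greedyPrune]
  split_ifs
  exacts [sdiff_subset, subset_rfl]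

theorem greedyPrune_antitone : Antitone (greedyPrune P f S) :=
  antitone_nat_of_succ_le (greedyPrune_succ_subset P f S)

theorem prop_greedyPrune (hS : P S) (n : ℕ) : P (greedyPrune P f S n) := by
  induction n with
  | zero => exact hS
  | succ n ih =>
    rw [greedyPrune]
    split_ifs with h
    exacts [h, ih]

theorem notMem_iInter_greedyPrune (hP : Monotone P) (k : ℕ)
    (h : P ((⋂ n, greedyPrune P f S n) \ {f k})) : f k ∉ ⋂ n, greedyPrune P f S n := by
  have hk : P (greedyPrune P f S k \ {f k}) :=
    hP (sdiff_subset_sdiff_left (iInter_subset _ k)) h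
  intro hmem
  have hsucc := mem_iInter.mp hmem (k + 1)
  rw [greedyPrune, if_pos hk] at hsucc
  exact hsucc.2 rfl

end GreedyPrune

theorem nonempty_iInter_inter_of_antitone {α ι : Type*} [Preorder ι] [IsDirectedOrder ι]
    [Nonempty ι] {A : ι → Set α} {F : Set α} (hF : F.Finite) (hA : Antitone A)
    (h : ∀ i, (A i ∩ F).Nonempty) : ((⋂ i, A i) ∩ F).Nonempty := by
  by_contra hempty
  have hleave : ∀ x ∈ F, ∀ᶠ i in atTop, x ∉ A i := by
    intro x hx
    obtain ⟨i, hi⟩ : ∃ i, x ∉ A i := by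
      simpa [mem_iInter] using fun hmem => hempty ⟨x, hmem, hx⟩
    filter_upwards [eventually_ge_atTop i] with j hij using fun hj => hi (hA hij hj)
  obtain ⟨i, hi⟩ := ((eventually_all_finite hF).mpr hleave).exists
  obtain ⟨x, hxA, hxF⟩ := h i
  exact hi x hxF hxA

theorem mem_add_iff_inter_nonempty {G : Type*} [AddCommGroup G] {A T : Set G} {g : G} :
    g ∈ A + T ↔ (A ∩ {s | g - s ∈ T}).Nonempty := by
  constructor
  · rintro ⟨s, hs, t, ht, rfl⟩
    exact ⟨s, hs, by simpa using ht⟩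
  · rintro ⟨s, hs, hgs⟩
    exact ⟨s, hs, g - s, hgs, add_sub_cancel s g⟩

theorem iInter_add_eq_univ_of_antitone {G : Type*} [AddCommGroup G] {A : ℕ → Set G}
    {S T : Set G} (hA : Antitone A) (hAS : ∀ n, A n ⊆ S) (hcov : ∀ n, A n + T = univ)
    (hfin : ∀ g : G, {s | s ∈ S ∧ g - s ∈ T}.Finite) : (⋂ n, A n) + T = univ := by
  refine eq_univ_of_forall fun g => mem_add_iff_inter_nonempty.mpr ?_
  have hmeet : ∀ n, (A n ∩ {s | s ∈ S ∧ g - s ∈ T}).Nonempty := fun n => by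
    obtain ⟨s, hs, hgs⟩ := mem_add_iff_inter_nonempty.mp (hcov n ▸ mem_univ g)
    exact ⟨s, hs, hAS n hs, hgs⟩
  obtain ⟨s, hs, -, hgs⟩ := nonempty_iInter_inter_of_antitone (hfin g) hA hmeet
  exact ⟨s, hs, hgs⟩

theorem finite_summands_of_finite_reps {G : Type*} [AddCommGroup G] {S T : Set G} {g : G}
    (hfin : {p : G × G | p.1 ∈ S ∧ p.2 ∈ T ∧ p.1 + p.2 = g}.Finite) :
    {s | s ∈ S ∧ g - s ∈ T}.Finite :=
  (hfin.image Prod.fst).subset fun s ⟨hs, hgs⟩ => ⟨(s, g - s), ⟨hs, hgs, add_sub_cancel s g⟩, rfl⟩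

theorem stmt0_general {G : Type*} [AddCommGroup G] (S T : Set G) (hS : S.Nonempty)
    (hST : S + T = Set.univ) (hcount : S.Countable)
    (hfin : ∀ g : G, {p : G × G | p.1 ∈ S ∧ p.2 ∈ T ∧ p.1 + p.2 = g}.Finite) :
    ∃ S₀ : Set G, S₀ ⊆ S ∧ S₀.Nonempty ∧ S₀ + T = Set.univ ∧
      ∀ s ∈ S₀, (S₀ \ {s}) + T ≠ Set.univ := by
  obtain ⟨f, rfl⟩ := hcount.exists_eq_range hS
  let Covers : Set G → Prop := fun A => A + T = univ
  have hmono : Monotone Covers := fun A B hAB hA =>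
    eq_univ_of_univ_subset (hA ▸ add_subset_add_right hAB)
  let A := greedyPrune Covers f (range f)
  have hAS : ∀ n, A n ⊆ range f := fun n =>
    greedyPrune_antitone Covers f (range f) (Nat.zero_le n)
  have hcov : (⋂ n, A n) + T = univ :=
    iInter_add_eq_univ_of_antitone (greedyPrune_antitone _ _ _) hAS
      (prop_greedyPrune Covers f _ hST) fun g => finite_summands_of_finite_reps (hfin g)
  refine ⟨⋂ n, A n, (iInter_subset A 0).trans (hAS 0),
    (add_nonempty.mp (hcov ▸ univ_nonempty)).1, hcov, ?_⟩
  intro s hs hmin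
  obtain ⟨k, rfl⟩ := hAS 0 (iInter_subset A 0 hs)
  exact notMem_iInter_greedyPrune Covers f _ hmono k hmin hs

theorem stmt0 {G : Type*} [AddCommGroup G] (S T : Set G) (hS : S.Nonempty) (hT : T.Nonempty)
    (hST : S + T = Set.univ) (hcount : S.Countable)
    (hfin : ∀ g : G, {p : G × G | p.1 ∈ S ∧ p.2 ∈ T ∧ p.1 + p.2 = g}.Finite) :
    ∃ S₀ : Set G, S₀ ⊆ S ∧ S₀.Nonempty ∧ S₀ + T = Set.univ ∧
      ∀ s ∈ S₀, (S₀ \ {s}) + T ≠ Set.univ :=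
  stmt0_general S T hS hST hcount hfin
end

section
/- Let t_0 < t_1 < t_2 < ⋯ be elements of ℤ^d (in lexicographic order) with t_0 > 0, t_n ≥ 2t_{n-1} for all n ≥ 1, and such that some t_n has all coordinates positive. Set t_{-1} = t_{-2} = 0, I_n = X_{-t_n, -t_{n-1}} and J_n = X_{-t_n, -t_{n-1}-t_{n-2}}. Then J_n ⊆ I_n for all n ≥ 0, and ⋃_{n≥0} I_n = ℤ^d \ ℤ^d_{≥0}. -/
open Pointwise

/-- `ℤ^d` equipped with the lexicographic order. -/
abbrev Zd (d : ℕ) := Lex (Fin d → ℤ)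

/-- the value `t (n-1)` with the convention `t_{-1} = 0`. -/
def tprev {d : ℕ} (t : ℕ → Zd d) : ℕ → Zd d := fun n => if n = 0 then 0 else t (n - 1)

/-- `I_n = X_{-t_n, -t_{n-1}}`. -/
def Iset {d : ℕ} (t : ℕ → Zd d) (n : ℕ) : Set (Zd d) :=
  {x | -(t n) ≤ x} \ {x | -(tprev t n) ≤ x}

/-- `J_n = X_{-t_n, -t_{n-1} - t_{n-2}}`. -/
def Jset {d : ℕ} (t : ℕ → Zd d) (n : ℕ) : Set (Zd d) :=
  {x | -(t n) ≤ x} \ {x | -(tprev t n + tprev t (n - 1)) ≤ x}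

/-- `W = {t_n : n ≥ 0} ∪ {0} ∪ {-t_n : n ≥ 0}`. -/
def Wset {d : ℕ} (t : ℕ → Zd d) : Set (Zd d) :=
  Set.range t ∪ {0} ∪ -(Set.range t)

/-- `V = {t_n : n ≥ 0} ∪ {-t_n : n ≥ 0}`. -/
def Vset {d : ℕ} (t : ℕ → Zd d) : Set (Zd d) :=
  Set.range t ∪ -(Set.range t)

/-- `(A, B)` is a co-minimal pair: `A + B = G` and removing any single element of
`A` or of `B` destroys the complement property. -/
def IsCoMinimalPair {G : Type*} [AddCommGroup G] (A B : Set G) : Prop :=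
  A + B = Set.univ ∧
  (∀ a ∈ A, (A \ {a}) + B ≠ Set.univ) ∧
  (∀ b ∈ B, A + (B \ {b}) ≠ Set.univ)


/-!
Since `t n ≥ 0`, the set `I_n` lies below `-t_{n-1} ≤ 0`, and shrinking the
lower end from `-t_{n-1}` to `-t_{n-1} - t_{n-2}` shrinks `J_n` into `I_n`. For the union, the
doubling condition gives `t_{N+k} ≥ 2^k t_N`, and a vector `t_N` with positive coordinates has
multiples dominating any `-x` coordinatewise, hence lexicographically; so every `x` lies above
some `-t_n`, and a negative `x` lies in `I_n` for the least such `n`.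
-/

theorem Zd.exists_neg_nsmul_le {d : ℕ} {v : Zd d} (hv : ∀ i, 0 < ofLex v i) (x : Zd d) :
    ∃ m : ℕ, -(m • v) ≤ x := by
  set S := ∑ i, (ofLex x i).natAbs
  refine ⟨S, Pi.toLex_monotone fun i => ?_⟩
  have hS : -ofLex x i ≤ S := by
    have : (ofLex x i).natAbs ≤ S :=
      Finset.single_le_sum (f := fun j => (ofLex x j).natAbs) (by simp) (Finset.mem_univ i)
    omega
  change -(S • ofLex v i) ≤ ofLex x i
  rw [nsmul_eq_mul]
  nlinarith [hv i]

section Doubling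

variable {α : Type*} [AddCommMonoid α] [PartialOrder α] [IsOrderedAddMonoid α]
  {t : ℕ → α}

theorem two_pow_nsmul_le_of_two_nsmul_le (hgrow : ∀ n, 2 • t n ≤ t (n + 1)) (N : ℕ) :
    ∀ k : ℕ, 2 ^ k • t N ≤ t (N + k)
  | 0 => by simp
  | k + 1 => calc
      2 ^ (k + 1) • t N = 2 • 2 ^ k • t N := by rw [pow_succ, mul_nsmul]
      _ ≤ 2 • t (N + k) := nsmul_le_nsmul_right (two_pow_nsmul_le_of_two_nsmul_le hgrow N k) 2
      _ ≤ t (N + k + 1) := hgrow _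

theorem pos_of_two_nsmul_le (hpos : 0 < t 0) (hgrow : ∀ n, 2 • t n ≤ t (n + 1)) :
    ∀ n, 0 < t n
  | 0 => hpos
  | n + 1 => by
    have ih := pos_of_two_nsmul_le hpos hgrow n
    calc 0 < t n + t n := ih.trans_le (le_add_of_nonneg_right ih.le)
      _ = 2 • t n := (two_nsmul _).symm
      _ ≤ t (n + 1) := hgrow n

end Doubling

section Intervals

variable {d : ℕ} {t : ℕ → Zd d}

theorem tprev_nonneg (ht : ∀ n, 0 ≤ t n) (n : ℕ) : 0 ≤ tprev t n := by
  unfold tprev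
  split_ifs
  exacts [le_rfl, ht _]

theorem Jset_subset_Iset (ht : ∀ n, 0 ≤ t n) (n : ℕ) : Jset t n ⊆ Iset t n :=
  fun _ hx => ⟨hx.1, fun h => hx.2 <|
    (neg_le_neg (le_add_of_nonneg_right (tprev_nonneg ht (n - 1)))).trans h⟩

theorem not_nonneg_of_mem_Iset (ht : ∀ n, 0 ≤ t n) {n : ℕ} {x : Zd d} (hx : x ∈ Iset t n) :
    ¬ 0 ≤ x :=
  fun h0 => hx.2 <| (neg_nonpos.2 (tprev_nonneg ht n)).trans h0

theorem exists_mem_Iset {x : Zd d} (hx : ¬ 0 ≤ x) (hex : ∃ n, -(t n) ≤ x) :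
    ∃ n, x ∈ Iset t n := by
  classical
  refine ⟨Nat.find hex, Nat.find_spec hex, fun hprev => ?_⟩
  rcases hn : Nat.find hex with _ | m
  · rw [hn] at hprev
    exact hx (by simpa [tprev] using hprev)
  · rw [hn] at hprev
    simp only [tprev, Nat.succ_ne_zero, if_false, Nat.succ_sub_one] at hprev
    exact Nat.find_min hex (by omega) hprev

end Intervals

theorem stmt2_general {d : ℕ} (t : ℕ → Zd d)
    (hpos : 0 < t 0) (hgrow : ∀ n : ℕ, 2 • t n ≤ t (n + 1))
    (hcoord : ∃ n : ℕ, ∀ i : Fin d, 0 < ofLex (t n) i) :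
    (∀ n : ℕ, Jset t n ⊆ Iset t n) ∧
      (⋃ n : ℕ, Iset t n) = {x : Zd d | ¬ (0 : Zd d) ≤ x} := by
  have ht : ∀ n, 0 ≤ t n := fun n => (pos_of_two_nsmul_le hpos hgrow n).le
  refine ⟨Jset_subset_Iset ht, ?_⟩
  obtain ⟨N, hN⟩ := hcoord
  have hcof : ∀ x : Zd d, ∃ n, -(t n) ≤ x := fun x => by
    obtain ⟨m, hm⟩ := Zd.exists_neg_nsmul_le hN x
    have hm2 : m • t N ≤ 2 ^ m • t N :=
      nsmul_le_nsmul_left (ht N) Nat.lt_two_pow_self.le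
    exact ⟨N + m, (neg_le_neg (hm2.trans (two_pow_nsmul_le_of_two_nsmul_le hgrow N m))).trans hm⟩
  ext x
  simp only [Set.mem_iUnion, Set.mem_ofPred_eq]
  exact ⟨fun ⟨_, hx⟩ => not_nonneg_of_mem_Iset ht hx, fun hx => exists_mem_Iset hx (hcof x)⟩

theorem stmt2 {d : ℕ} (hd : 0 < d) (t : ℕ → Zd d) (hmono : StrictMono t)
    (hpos : 0 < t 0) (hgrow : ∀ n : ℕ, 2 • t n ≤ t (n + 1))
    (hcoord : ∃ n : ℕ, ∀ i : Fin d, 0 < ofLex (t n) i) :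
    (∀ n : ℕ, Jset t n ⊆ Iset t n) ∧
      (⋃ n : ℕ, Iset t n) = {x : Zd d | ¬ (0 : Zd d) ≤ x} :=
  stmt2_general t hpos hgrow hcoord
end

section
/- With the same notation, for every n ≥ 1 the inclusion (J_0 ∪ ⋯ ∪ J_{n-1} ∪ (J_n ∩ ℤ^d_{≥ -2t_{n-1}})) + W ⊆ (ℤ^d \ ℤ^d_{≥ -t_n}) ∪ ℤ^d_{≥ -3t_{n-1}} holds. -/
open Pointwise

/-! Every `x` on the left lies in `[-2 t_{n-1}, 0)`, while every `w ∈ W` satisfies either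
`w ≥ -t_{n-1}` or `w ≤ -t_n`. In the first case `x + w ≥ -3 t_{n-1}`; in the second
`x + w < w ≤ -t_n`. -/

namespace Zd

variable {d : ℕ} {t : ℕ → Zd d}

lemma tprev_nonneg (ht : ∀ m, 0 ≤ t m) (m : ℕ) : 0 ≤ tprev t m := by
  unfold tprev
  split_ifs
  exacts [le_rfl, ht _]

lemma neg_of_mem_Jset (ht : ∀ m, 0 ≤ t m) {m : ℕ} {x : Zd d} (hx : x ∈ Jset t m) : x < 0 := by
  refine lt_of_not_ge fun hx0 => hx.2 (le_trans ?_ hx0 : _ ≤ x)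
  exact neg_nonpos.2 (add_nonneg (tprev_nonneg ht m) (tprev_nonneg ht (m - 1)))

lemma neg_le_or_le_neg_of_mem_Wset (hmono : Monotone t) (ht : ∀ m, 0 ≤ t m) (k : ℕ) {w : Zd d}
    (hw : w ∈ Wset t) : -(t k) ≤ w ∨ w ≤ -(t (k + 1)) := by
  rcases hw with (⟨m, rfl⟩ | rfl) | ⟨m, hm⟩
  · exact Or.inl ((neg_nonpos.2 (ht k)).trans (ht m))
  · exact Or.inl (neg_nonpos.2 (ht k))
  · rw [neg_eq_iff_eq_neg.1 hm.symm]
    rcases le_or_gt m k with hmk | hkm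
    · exact Or.inl (neg_le_neg (hmono hmk))
    · exact Or.inr (neg_le_neg (hmono hkm))

lemma mem_Ico_of_mem_union_Jset (hmono : Monotone t) (ht : ∀ m, 0 ≤ t m) {k : ℕ} {x : Zd d}
    (hx : x ∈ (⋃ m : ℕ, ⋃ (_ : m < k + 1), Jset t m) ∪
      (Jset t (k + 1) ∩ {x : Zd d | -(2 • t k) ≤ x})) :
    x ∈ Set.Ico (-(2 • t k)) 0 := by
  rcases hx with hx | ⟨hx, hx2⟩
  · obtain ⟨m, hm, hxm⟩ := Set.mem_iUnion₂.1 hx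
    refine ⟨le_trans ?_ hxm.1, neg_of_mem_Jset ht hxm⟩
    calc -(2 • t k) ≤ -(t k) := neg_le_neg (by rw [two_nsmul]; exact le_add_of_nonneg_left (ht k))
      _ ≤ -(t m) := neg_le_neg (hmono (Nat.le_of_lt_succ hm))
  · exact ⟨hx2, neg_of_mem_Jset ht hx⟩

end Zd

theorem stmt4_general {d : ℕ} (t : ℕ → Zd d) (hmono : StrictMono t)
    (hpos : 0 < t 0) :
    ∀ n : ℕ, 1 ≤ n →
      ((⋃ m : ℕ, ⋃ (_ : m < n), Jset t m) ∪
          (Jset t n ∩ {x : Zd d | -(2 • t (n - 1)) ≤ x})) + Wset t ⊆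
        {x : Zd d | ¬ -(t n) ≤ x} ∪ {x : Zd d | -(3 • t (n - 1)) ≤ x} := by
  intro n hn
  obtain ⟨k, rfl⟩ := Nat.exists_eq_add_of_le' hn
  rintro _ ⟨x, hx, w, hw, rfl⟩
  simp only [Nat.add_sub_cancel] at hx ⊢
  have ht : ∀ m, 0 ≤ t m := fun m => hpos.le.trans (hmono.monotone (Nat.zero_le m))
  obtain ⟨hx_lower, hx_neg⟩ := Zd.mem_Ico_of_mem_union_Jset hmono.monotone ht hx
  rcases Zd.neg_le_or_le_neg_of_mem_Wset hmono.monotone ht k hw with hw | hw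
  · refine Or.inr ?_
    calc -(3 • t k) = -(2 • t k) + -(t k) := by rw [succ_nsmul, neg_add]
      _ ≤ x + w := add_le_add hx_lower hw
  · exact Or.inl fun h => (add_lt_of_neg_left w hx_neg).not_ge (hw.trans h)

theorem stmt4 {d : ℕ} (hd : 0 < d) (t : ℕ → Zd d) (hmono : StrictMono t)
    (hpos : 0 < t 0) (hgrow : ∀ n : ℕ, 2 • t n ≤ t (n + 1))
    (hcoord : ∃ n : ℕ, ∀ i : Fin d, 0 < ofLex (t n) i) :
    ∀ n : ℕ, 1 ≤ n →
      ((⋃ m : ℕ, ⋃ (_ : m < n), Jset t m) ∪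
          (Jset t n ∩ {x : Zd d | -(2 • t (n - 1)) ≤ x})) + Wset t ⊆
        {x : Zd d | ¬ -(t n) ≤ x} ∪ {x : Zd d | -(3 • t (n - 1)) ≤ x} :=
  stmt4_general t hmono hpos
end

section
/- Let t_0 < t_1 < ⋯ in ℤ^d (lexicographic order) with t_0 > 0, t_n ≥ 6t_{n-1} for all n ≥ 1, and some t_n with all coordinates positive. Let W = {±t_n : n ≥ 0} ∪ {0}. Then there exists a subset G of ℤ^d \ ℤ^d_{≥0} such that (W, G) is a co-minimal pair in ℤ^d. -/
open Pointwise

/-! `G` is built by a Rasiowa–Sikorski (greedy, countable) construction. At each stage finitely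
many negative elements of `G` are chosen, each paired with some `w ∈ W` so that `w + g` has no
other representation in `W + G`; this pairing is what makes every element of `W` and of `G`
indispensable. An uncovered `x` is covered as `t n + (x - t n)`, and a fresh witness for `w` is
`w + (t m - t n)`, with `m` and then `n` large. Both steps keep the old unique representations
because `W` is lacunary: for each `e ≠ 0`, `t n - e ∉ W` for all large `n`. -/

open Filter

section UniqueSum

variable {G : Type*} [AddCommGroup G]

def IsUniqueSum (A B : Set G) (a b : G) : Prop :=
  a ∈ A ∧ b ∈ B ∧ ∀ a' ∈ A, ∀ b' ∈ B, a' + b' = a + b → a' = a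

theorem isCoMinimalPair_of_isUniqueSum {A B : Set G} (hAB : A + B = Set.univ)
    (hA : ∀ a ∈ A, ∃ b, IsUniqueSum A B a b) (hB : ∀ b ∈ B, ∃ a, IsUniqueSum A B a b) :
    IsCoMinimalPair A B := by
  refine ⟨hAB, fun a ha hcover => ?_, fun b hb hcover => ?_⟩
  · obtain ⟨b, -, -, huniq⟩ := hA a ha
    obtain ⟨a', ⟨ha', hne⟩, b', hb', hsum⟩ : a + b ∈ (A \ {a}) + B := hcover ▸ Set.mem_univ _
    exact hne (huniq a' ha' b' hb' hsum)
  · obtain ⟨a, -, -, huniq⟩ := hB b hb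
    obtain ⟨a', ha', b', ⟨hb', hne⟩, hsum⟩ : a + b ∈ A + (B \ {b}) := hcover ▸ Set.mem_univ _
    obtain rfl := huniq a' ha' b' hb' hsum
    exact hne (add_left_cancel hsum)

end UniqueSum

section Construction

variable {L : Type*} [AddCommGroup L] {W : Set L} {P : Finset (L × L)} {t : ℕ → L}

theorem eventually_forall_add_sub_ne (hsparse : ∀ e ≠ 0, ∀ᶠ n in atTop, t n - e ∉ W)
    {F : Finset L} {c : L} (hc : c ∉ F) :
    ∀ᶠ n in atTop, ∀ s ∈ F, ∀ w ∈ W, w + (c - t n) ≠ s := by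
  refine (eventually_all_finset F).2 fun s hs => ?_
  filter_upwards [hsparse (c - s) (sub_ne_zero.2 (ne_of_mem_of_not_mem hs hc).symm)]
    with n hn w hw hsum
  exact hn (by rw [← hsum]; convert hw using 1; abel)

variable [PartialOrder L]

/-- A finite stage of the construction: the second coordinates are the elements of `G` chosen so
far, each paired with the element of `W` of its unique representation. -/
def Admissible (W : Set L) (P : Finset (L × L)) : Prop :=
  ∀ q ∈ P, q.2 < 0 ∧ IsUniqueSum W (Prod.snd '' (P : Set (L × L))) q.1 q.2

theorem admissible_empty : Admissible W ∅ := by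
  simp [Admissible]

theorem Admissible.insert_pair [DecidableEq L] (hP : Admissible W P) {w₀ γ : L} (hw₀ : w₀ ∈ W)
    (hγ : γ < 0) (hold : ∀ q ∈ P, ∀ w ∈ W, w + γ ≠ q.1 + q.2)
    (hnew : ∀ w ∈ W, w ≠ w₀ → ∀ b ∈ Prod.snd '' (P : Set (L × L)), w + b ≠ w₀ + γ) :
    Admissible W (insert (w₀, γ) P) := by
  intro q hq
  rw [Finset.coe_insert, Set.image_insert_eq]
  rcases Finset.mem_insert.1 hq with rfl | hqP
  · refine ⟨hγ, hw₀, Set.mem_insert _ _, fun w hw b hb hsum => ?_⟩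
    by_contra hne
    rcases hb with rfl | hb
    · exact hne (add_right_cancel hsum)
    · exact hnew w hw hne b hb hsum
  · obtain ⟨hneg, ha, hb, huniq⟩ := hP q hqP
    refine ⟨hneg, ha, Set.mem_insert_of_mem _ hb, fun w hw b hb' hsum => ?_⟩
    rcases hb' with rfl | hb'
    · exact absurd hsum (hold q hqP w hw)
    · exact huniq w hw b hb' hsum

theorem Admissible.isUniqueSum_biUnion {D : Set (Finset (L × L))} (hD : DirectedOn (· ⊆ ·) D)
    (hadm : ∀ P ∈ D, Admissible W P) (hP : P ∈ D) {q : L × L} (hq : q ∈ P) :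
    IsUniqueSum W (⋃ P ∈ D, Prod.snd '' (P : Set (L × L))) q.1 q.2 := by
  obtain ⟨-, ha, hb, -⟩ := hadm P hP q hq
  refine ⟨ha, Set.mem_biUnion hP hb, fun w hw b hb' hsum => ?_⟩
  obtain ⟨P', hP', hb'⟩ := Set.mem_iUnion₂.1 hb'
  obtain ⟨P'', hP'', hPP'', hP'P''⟩ := hD P hP P' hP'
  exact (hadm P'' hP'' q (hPP'' hq)).2.2.2 w hw b (Set.image_mono (Finset.coe_subset.2 hP'P'') hb')
    hsum

variable [IsOrderedAddMonoid L] (hW : ∀ w ∈ W, -w ∈ W) (htW : ∀ n, t n ∈ W)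
  (ht : ∀ c, ∀ᶠ n in atTop, c < t n) (hsparse : ∀ e ≠ 0, ∀ᶠ n in atTop, t n - e ∉ W)
include ht hsparse

include htW in
theorem Admissible.exists_cover [DecidableEq L] (hP : Admissible W P) (x : L) :
    ∃ P', P ⊆ P' ∧ Admissible W P' ∧ x ∈ W + Prod.snd '' (P' : Set (L × L)) := by
  by_cases hx : x ∈ W + Prod.snd '' (P : Set (L × L))
  · exact ⟨P, subset_rfl, hP, hx⟩
  have hxF : x ∉ P.image fun q => q.1 + q.2 := by
    simp only [Finset.mem_image, not_exists, not_and]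
    exact fun q hq hsum => hx ⟨q.1, (hP q hq).2.1, q.2, ⟨q, hq, rfl⟩, hsum⟩
  obtain ⟨n, hn, hxn⟩ := ((eventually_forall_add_sub_ne hsparse hxF).and (ht x)).exists
  refine ⟨insert (t n, x - t n) P, Finset.subset_insert _ _,
    hP.insert_pair (htW n) (sub_neg.2 hxn) (fun q hq => hn _ (Finset.mem_image_of_mem _ hq))
      (fun w hw _ b hb hsum => hx ⟨w, hw, b, hb, hsum.trans (add_sub_cancel _ _)⟩), ?_⟩
  exact ⟨t n, htW n, x - t n, ⟨_, Finset.mem_insert_self _ _, rfl⟩, add_sub_cancel _ _⟩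

include hW in
theorem Admissible.exists_witness [DecidableEq L] (hP : Admissible W P) {w₀ : L} (hw₀ : w₀ ∈ W) :
    ∃ P', P ⊆ P' ∧ Admissible W P' ∧ ∃ γ, (w₀, γ) ∈ P' := by
  set F := (P.image fun q => q.1 + q.2) ∪ P.image fun q => q.2 - w₀
  obtain ⟨m, hm⟩ := ((eventually_all_finset F).2 fun s _ => ht s).exists
  have hzF : t m ∉ F := fun h => lt_irrefl _ (hm _ h)
  obtain ⟨n, hn, hzn⟩ := ((eventually_forall_add_sub_ne hsparse hzF).and (ht (t m))).exists
  refine ⟨insert (w₀, t m - t n) P, Finset.subset_insert _ _, hP.insert_pair hw₀ (sub_neg.2 hzn)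
    (fun q hq => hn _ (Finset.mem_union_left _ (Finset.mem_image_of_mem _ hq))) ?_,
    _, Finset.mem_insert_self _ _⟩
  rintro w hw - b ⟨q, hq, rfl⟩ hsum
  refine hn _ (Finset.mem_union_right _ (Finset.mem_image_of_mem _ hq)) (-w) (hW w hw) ?_
  rw [← sub_eq_zero, ← neg_eq_zero, ← sub_eq_zero.2 hsum]
  abel

include hW htW in
theorem exists_directedOn_admissible [DecidableEq L] [Countable L] :
    ∃ D : Set (Finset (L × L)), DirectedOn (· ⊆ ·) D ∧ (∀ P ∈ D, Admissible W P) ∧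
      (∀ x, ∃ P ∈ D, x ∈ W + Prod.snd '' (P : Set (L × L))) ∧
      ∀ w ∈ W, ∃ P ∈ D, ∃ γ, (w, γ) ∈ P := by
  let S := {P : Finset (L × L) // Admissible W P}
  have : Encodable (L ⊕ W) := Encodable.ofCountable _
  let 𝒟 : L ⊕ W → Order.Cofinal S := Sum.elim
    (fun x => ⟨{P | x ∈ W + Prod.snd '' (P.1 : Set (L × L))}, fun P => by
      obtain ⟨P', hPP', hP', hx⟩ := P.2.exists_cover htW ht hsparse x
      exact ⟨⟨P', hP'⟩, hx, hPP'⟩⟩)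
    (fun w => ⟨{P | ∃ γ, (w.1, γ) ∈ P.1}, fun P => by
      obtain ⟨P', hPP', hP', hw⟩ := P.2.exists_witness hW ht hsparse w.2
      exact ⟨⟨P', hP'⟩, hw, hPP'⟩⟩)
  let I := Order.idealOfCofinals (⟨∅, admissible_empty⟩ : S) 𝒟
  have hmeet := Order.cofinal_meets_idealOfCofinals (⟨∅, admissible_empty⟩ : S) 𝒟
  refine ⟨Subtype.val '' (I : Set S), directedOn_image.2 I.directed, ?_, fun x => ?_,
    fun w hw => ?_⟩
  · rintro _ ⟨P, -, rfl⟩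
    exact P.2
  · obtain ⟨P, hx, hPI⟩ := hmeet (.inl x)
    exact ⟨P.1, Set.mem_image_of_mem _ hPI, hx⟩
  · obtain ⟨P, hw, hPI⟩ := hmeet (.inr ⟨w, hw⟩)
    exact ⟨P.1, Set.mem_image_of_mem _ hPI, hw⟩

include hW htW ht hsparse in
theorem exists_neg_isCoMinimalPair [Countable L] :
    ∃ G : Set L, G ⊆ {x | ¬ 0 ≤ x} ∧ IsCoMinimalPair W G := by
  classical
  obtain ⟨D, hD, hadm, hcover, hwit⟩ := exists_directedOn_admissible hW htW ht hsparse
  have huniq {P : Finset (L × L)} (hP : P ∈ D) {q : L × L} (hq : q ∈ P) :=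
    Admissible.isUniqueSum_biUnion hD hadm hP hq
  refine ⟨⋃ P ∈ D, Prod.snd '' (P : Set (L × L)), ?_, isCoMinimalPair_of_isUniqueSum ?_ ?_ ?_⟩
  · simp only [Set.iUnion_subset_iff]
    rintro P hP _ ⟨q, hq, rfl⟩
    exact (hadm P hP q hq).1.not_ge
  · refine Set.eq_univ_of_forall fun x => ?_
    obtain ⟨P, hP, hx⟩ := hcover x
    exact Set.add_subset_add_left (Set.subset_biUnion_of_mem hP) hx
  · intro a ha
    obtain ⟨P, hP, γ, hγ⟩ := hwit a ha
    exact ⟨γ, huniq hP hγ⟩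
  · intro b hb
    obtain ⟨P, hP, q, hq, rfl⟩ := Set.mem_iUnion₂.1 hb
    exact ⟨q.1, huniq hP hq⟩

end Construction

theorem neg_mem_union_zero_union_neg {G : Type*} [SubtractionMonoid G] {s : Set G} {w : G}
    (hw : w ∈ s ∪ {0} ∪ -s) : -w ∈ s ∪ {0} ∪ -s := by
  rcases hw with (hw | rfl) | hw
  · exact Or.inr (by rwa [Set.mem_neg, neg_neg])
  · exact Or.inl (Or.inr neg_zero)
  · exact Or.inl (Or.inl hw)

theorem pos_of_nsmul_le_succ {M : Type*} [AddMonoid M] [Preorder M] [AddLeftMono M] {t : ℕ → M}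
    {k : ℕ} (hk : k ≠ 0) (hpos : 0 < t 0) (hgrow : ∀ n, k • t n ≤ t (n + 1)) (n : ℕ) :
    0 < t n := by
  induction n with
  | zero => exact hpos
  | succ n ih => exact (nsmul_pos ih hk).trans_le (hgrow n)

section Lacunary

variable {L : Type*} [AddCommGroup L] [LinearOrder L] [IsOrderedAddMonoid L] {t : ℕ → L}
  (hpos : 0 < t 0) (hgrow : ∀ n, 2 • t n ≤ t (n + 1))
include hpos hgrow

theorem strictMono_of_two_nsmul_le : StrictMono t :=
  strictMono_nat_of_lt_succ fun n =>
    calc t n < t n + t n := lt_add_of_pos_right _ (pos_of_nsmul_le_succ two_ne_zero hpos hgrow n)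
      _ = 2 • t n := (two_nsmul _).symm
      _ ≤ t (n + 1) := hgrow n

theorem tendsto_atTop_of_two_nsmul_le {n₀ : ℕ}
    (h : Tendsto (fun k : ℕ => k • t n₀) atTop atTop) : Tendsto t atTop atTop := by
  have hmono := (strictMono_of_two_nsmul_le hpos hgrow).monotone
  have hle (k : ℕ) : k • t n₀ ≤ t (k + n₀) := by
    induction k with
    | zero => simpa using (pos_of_nsmul_le_succ two_ne_zero hpos hgrow n₀).le
    | succ k ih =>
      calc (k + 1) • t n₀ = k • t n₀ + t n₀ := succ_nsmul _ _
        _ ≤ t (k + n₀) + t (k + n₀) := add_le_add ih (hmono (Nat.le_add_left _ _))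
        _ = 2 • t (k + n₀) := (two_nsmul _).symm
        _ ≤ t (k + 1 + n₀) := by rw [Nat.add_right_comm]; exact hgrow _
  exact (tendsto_add_atTop_iff_nat n₀).1 (tendsto_atTop_mono hle h)

theorem eventually_sub_notMem (ht : Tendsto t atTop atTop) {e : L} (he : e ≠ 0) :
    ∀ᶠ n in atTop, t n - e ∉ Set.range t ∪ {0} ∪ -Set.range t := by
  have hmono := (strictMono_of_two_nsmul_le hpos hgrow).monotone
  have : Nontrivial L := nontrivial_of_lt _ _ hpos
  have hbig := ht.eventually_gt_atTop |e|
  filter_upwards [hbig, (tendsto_sub_atTop_nat 1).eventually hbig, eventually_ge_atTop 1]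
    with n hn hn' hn1
  rintro ((⟨m, hm⟩ | h0) | ⟨m, hm⟩)
  · rcases lt_trichotomy m n with hmn | rfl | hmn
    · have hdouble : t (n - 1) + t (n - 1) ≤ t n := by
        simpa [two_nsmul, Nat.sub_add_cancel hn1] using hgrow (n - 1)
      refine hn'.not_ge ?_
      calc t (n - 1) ≤ t n - t (n - 1) := le_sub_iff_add_le.2 hdouble
        _ ≤ t n - t m := sub_le_sub_left (hmono (by omega)) _
        _ = e := by rw [hm, sub_sub_cancel]
        _ ≤ |e| := le_abs_self e
    · exact he (sub_eq_self.1 hm.symm)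
    · refine hn.not_ge ?_
      calc t n ≤ t (n + 1) - t n := le_sub_iff_add_le.2 (two_nsmul (t n) ▸ hgrow n)
        _ ≤ t m - t n := sub_le_sub_right (hmono hmn) _
        _ = -e := by rw [hm]; abel
        _ ≤ |e| := neg_le_abs e
  · exact hn.not_ge ((sub_eq_zero.1 h0).trans_le (le_abs_self e))
  · refine hn.not_ge ?_
    calc t n ≤ t n + t m := le_add_of_nonneg_right (pos_of_nsmul_le_succ two_ne_zero hpos hgrow m).le
      _ = e := by rw [hm]; abel
      _ ≤ |e| := le_abs_self e

end Lacunary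

theorem Pi.Lex.tendsto_nsmul_atTop {ι : Type*} [LinearOrder ι] [WellFoundedLT ι] [Finite ι]
    {y : Lex (ι → ℤ)} (hy : ∀ i, 0 < ofLex y i) :
    Tendsto (fun k : ℕ => k • y) atTop atTop := by
  refine tendsto_atTop.2 fun c => ?_
  have : ∀ᶠ k : ℕ in atTop, ∀ i, ofLex c i ≤ k • ofLex y i :=
    eventually_all.2 fun i => (tendsto_id.atTop_nsmul_const (hy i)).eventually_ge_atTop _
  filter_upwards [this] with k hk
  exact Pi.toLex_monotone hk

theorem stmt9_general {d : ℕ} (t : ℕ → Zd d)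
    (hpos : 0 < t 0) (hgrow : ∀ n : ℕ, 6 • t n ≤ t (n + 1))
    (hcoord : ∃ n : ℕ, ∀ i : Fin d, 0 < ofLex (t n) i) :
    ∃ G : Set (Zd d), G ⊆ {x : Zd d | ¬ (0 : Zd d) ≤ x} ∧
      IsCoMinimalPair (Wset t) G := by
  have : Countable (Zd d) := Countable.of_equiv _ toLex
  have : Nontrivial (Zd d) := nontrivial_of_lt _ _ hpos
  have hdouble (n : ℕ) : 2 • t n ≤ t (n + 1) :=
    (nsmul_le_nsmul_left (pos_of_nsmul_le_succ (by norm_num) hpos hgrow n).le (by norm_num)).trans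
      (hgrow n)
  obtain ⟨n₀, hn₀⟩ := hcoord
  have ht := tendsto_atTop_of_two_nsmul_le hpos hdouble (Pi.Lex.tendsto_nsmul_atTop hn₀)
  exact exists_neg_isCoMinimalPair (fun _ => neg_mem_union_zero_union_neg)
    (fun n => Or.inl (Or.inl ⟨n, rfl⟩)) ht.eventually_gt_atTop
    (fun _ he => eventually_sub_notMem hpos hdouble ht he)

theorem stmt9 {d : ℕ} (hd : 0 < d) (t : ℕ → Zd d) (hmono : StrictMono t)
    (hpos : 0 < t 0) (hgrow : ∀ n : ℕ, 6 • t n ≤ t (n + 1))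
    (hcoord : ∃ n : ℕ, ∀ i : Fin d, 0 < ofLex (t n) i) :
    ∃ G : Set (Zd d), G ⊆ {x : Zd d | ¬ (0 : Zd d) ≤ x} ∧
      IsCoMinimalPair (Wset t) G :=
  stmt9_general t hpos hgrow hcoord
end

section
/- Let t_0 < t_1 < ⋯ in ℤ^d (lexicographic order) with t_0 > 0, t_n > 3t_{n-1} for all n ≥ 1, and some t_n with all coordinates positive. Let V = {±t_n : n ≥ 0}. Then there exists a symmetric subset Q of ℤ^d with 0 ∉ Q such that (V, Q) is a co-minimal pair in ℤ^d. -/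
open Pointwise

/-!
Call a set `V` lacunary if every finite `F` admits some `u ∈ V \ F` with `u + f ∉ V` for
`f ∈ F \ {0}` and `2u + f ∉ V` for `f ∈ F`. The set `{±tₙ}` is lacunary: the first coordinate of
`tₙ` at least triples and is eventually positive, so the `tₙ` are cofinal, and `u = t_{N+1}` with
`t_N > |f|` for all `f ∈ F` works because `t_{n+1} > 3tₙ` leaves no `t_b` near `u` or `2u`.

For a symmetric lacunary `V` in a countable group without `2`-torsion, `Q` is grown through finite
symmetric stages. Each new pair `±q` comes with a certificate `g` whose only representation in
`V + Q` is `(g - q) + q`, so that `g - q ∈ V` and `q ∈ Q` are both indispensable. Lacunarity yields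
pairs far enough out to cover any prescribed element, or to certify any prescribed `v ∈ V`, without
giving old certificates a second representation. A chain meeting all these countably many
requirements exists by the Rasiowa–Sikorski lemma.
-/

open Set

section CoMinimal

variable {G : Type*} [AddCommGroup G]

lemma diff_singleton_add_ne_univ {A B : Set G} {a b : G}
    (hu : ∀ a' ∈ A, ∀ b' ∈ B, a' + b' = a + b → b' = b) : (A \ {a}) + B ≠ univ := by
  intro h
  obtain ⟨a', ⟨ha', hne⟩, b', hb', hsum⟩ : a + b ∈ (A \ {a}) + B := h ▸ mem_univ _
  obtain rfl := hu a' ha' b' hb' hsum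
  exact hne (add_right_cancel hsum)

lemma add_diff_singleton_ne_univ {A B : Set G} {a b : G}
    (hu : ∀ a' ∈ A, ∀ b' ∈ B, a' + b' = a + b → b' = b) : A + (B \ {b}) ≠ univ := by
  intro h
  obtain ⟨a', ha', b', ⟨hb', hne⟩, hsum⟩ : a + b ∈ A + (B \ {b}) := h ▸ mem_univ _
  exact hne (hu a' ha' b' hb' hsum)

lemma neg_mem_iff_of_neg_eq {V : Set G} (hV : -V = V) {x : G} : -x ∈ V ↔ x ∈ V := by
  rw [← Set.mem_neg, hV]

def IsUniqueRep (V Q : Set G) (p q : G) : Prop :=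
  q ∈ Q ∧ ∀ q' ∈ Q, p - q' ∈ V ↔ q' = q

lemma IsUniqueRep.neg {V Q : Set G} {p q : G} (hV : -V = V) (hQ : -Q = Q)
    (h : IsUniqueRep V Q p q) : IsUniqueRep V Q (-p) (-q) := by
  refine ⟨(neg_mem_iff_of_neg_eq hQ).2 h.1, fun q' hq' => ?_⟩
  rw [← neg_mem_iff_of_neg_eq hV, show -(-p - q') = p - -q' by abel,
    h.2 _ ((neg_mem_iff_of_neg_eq hQ).2 hq'), neg_eq_iff_eq_neg]

lemma IsUniqueRep.add_ne_univ {V Q : Set G} {p q : G} (h : IsUniqueRep V Q p q) :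
    (V \ {p - q}) + Q ≠ univ ∧ V + (Q \ {q}) ≠ univ := by
  have hu : ∀ a ∈ V, ∀ b ∈ Q, a + b = p - q + q → b = q := fun a ha b hb hab => by
    rw [sub_add_cancel] at hab
    exact (h.2 b hb).1 (by rwa [← hab, add_sub_cancel_right])
  exact ⟨diff_singleton_add_ne_univ hu, add_diff_singleton_ne_univ hu⟩

end CoMinimal

section Greedy

variable {G : Type*} [AddCommGroup G] {V Q P : Set G}

def IsLacunary (V : Set G) : Prop :=
  ∀ F : Set G, F.Finite → ∃ u ∈ V, u ∉ F ∧ ∀ f ∈ F, (f ≠ 0 → u + f ∉ V) ∧ u + u + f ∉ V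

/-- A finite stage of the greedy construction of `Q`, with `P` its set of certificates. -/
structure IsAdmissible (V Q P : Set G) : Prop where
  finite_Q : Q.Finite
  finite_P : P.Finite
  neg_eq : -Q = Q
  zero_notMem : (0 : G) ∉ Q
  isUniqueRep : ∀ p ∈ P, ∃ q, IsUniqueRep V Q p q
  exists_cert : ∀ q ∈ Q, ∃ p ∈ P, p - q ∈ V

lemma isAdmissible_empty : IsAdmissible V ∅ ∅ :=
  ⟨finite_empty, finite_empty, neg_empty, notMem_empty 0, by simp, by simp⟩

namespace IsAdmissible

lemma neg_mem (h : IsAdmissible V Q P) {c : G} (hc : c ∈ Q) : -c ∈ Q :=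
  (neg_mem_iff_of_neg_eq h.neg_eq).2 hc

lemma neg_sub_notMem (h : IsAdmissible V Q P) (hV : -V = V) {x : G}
    (hx : ∀ q ∈ Q, x - q ∉ V) : ∀ c ∈ Q, -x - c ∉ V := by
  intro c hc
  rw [← neg_mem_iff_of_neg_eq hV, show -(-x - c) = x - -c by abel]
  exact hx _ (h.neg_mem hc)

lemma ne_of_forall_sub_notMem (h : IsAdmissible V Q P) {x : G} (hx : ∀ q ∈ Q, x - q ∉ V)
    {p : G} (hp : p ∈ P) : p ≠ x := by
  rintro rfl
  obtain ⟨q, hq, hrep⟩ := h.isUniqueRep p hp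
  exact hx q hq ((hrep q hq).2 rfl)

lemma insert_pair (h : IsAdmissible V Q P) (hV : -V = V) {g q : G} (hq : q ≠ 0) (hgq : g - q ∈ V)
    (hg : ∀ c ∈ Q, g - c ∉ V) (hg_neg : g + q ∉ V) (hP : ∀ p ∈ P, p - q ∉ V ∧ p + q ∉ V) :
    IsAdmissible V (insert q (insert (-q) Q)) (insert g (insert (-g) P)) := by
  have hneg : -insert q (insert (-q) Q) = insert q (insert (-q) Q) := by
    rw [neg_insert, neg_insert, neg_neg, h.neg_eq, insert_comm]
  have hrep : IsUniqueRep V (insert q (insert (-q) Q)) g q := by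
    refine ⟨mem_insert _ _, fun c hc => ⟨fun hgc => ?_, fun hcq => hcq ▸ hgq⟩⟩
    rcases hc with rfl | rfl | hc
    · rfl
    · exact absurd (by rwa [sub_neg_eq_add] at hgc) hg_neg
    · exact absurd hgc (hg c hc)
  refine ⟨(h.finite_Q.insert _).insert _, (h.finite_P.insert _).insert _, hneg, ?_, ?_, ?_⟩
  · rintro (h0 | h0 | h0)
    · exact hq h0.symm
    · exact hq (neg_eq_zero.1 h0.symm)
    · exact h.zero_notMem h0
  · rintro p (rfl | rfl | hp)
    · exact ⟨q, hrep⟩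
    · exact ⟨-q, hrep.neg hV hneg⟩
    obtain ⟨q₀, hq₀, hrep₀⟩ := h.isUniqueRep p hp
    refine ⟨q₀, mem_insert_of_mem _ (mem_insert_of_mem _ hq₀), fun c hc => ?_⟩
    rcases hc with rfl | rfl | hc
    · exact iff_of_false (hP p hp).1 fun hc => (hP p hp).1 (hc ▸ (hrep₀ q₀ hq₀).2 rfl)
    · rw [sub_neg_eq_add]
      exact iff_of_false (hP p hp).2 fun hc => (hP p hp).2 (by
        rw [← sub_neg_eq_add, hc]; exact (hrep₀ q₀ hq₀).2 rfl)
    · exact hrep₀ c hc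
  · rintro c (rfl | rfl | hc)
    · exact ⟨g, mem_insert _ _, hgq⟩
    · refine ⟨-g, mem_insert_of_mem _ (mem_insert _ _), ?_⟩
      rwa [← neg_mem_iff_of_neg_eq hV, neg_sub, sub_neg_eq_add, add_comm, ← sub_eq_add_neg]
    · obtain ⟨p, hp, hpc⟩ := h.exists_cert c hc
      exact ⟨p, mem_insert_of_mem _ (mem_insert_of_mem _ hp), hpc⟩

lemma exists_extend_cert (h : IsAdmissible V Q P) (hV : -V = V) (hlac : IsLacunary V) {v : G}
    (hv : v ∈ V) : ∃ Q' P', Q ⊆ Q' ∧ P ⊆ P' ∧ IsAdmissible V Q' P' ∧ ∃ p ∈ P', p - v ∈ Q' := by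
  -- The shift `w` keeps `v + w` out of `Q`: with `q = u` alone, the certificate `g = v + q`
  -- would already be represented as `u + v` whenever `v ∈ Q`.
  obtain ⟨w, -, hw, -⟩ := hlac (P ∪ -P ∪ (· - v) '' Q)
    ((h.finite_P.union h.finite_P.neg).union (h.finite_Q.image _))
  simp only [mem_union, mem_neg, mem_image, not_or, not_exists, not_and] at hw
  obtain ⟨⟨hwP, hwP'⟩, hwQ⟩ := hw
  obtain ⟨u, -, hu, hF⟩ := hlac ({-w, v + w + w} ∪ (v + w - ·) '' Q ∪ (w - ·) '' P ∪ (w + ·) '' P)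
    (((((finite_singleton _).insert _).union (h.finite_Q.image _)).union
      (h.finite_P.image _)).union (h.finite_P.image _))
  have hext := h.insert_pair hV (g := v + (u + w)) (q := u + w)
    (fun h0 => hu (by simp [eq_neg_of_add_eq_zero_left h0]))
    (by rwa [add_sub_cancel_right])
    (fun c hc => by
      have := (hF (v + w - c) (by simp [hc])).1
        (sub_ne_zero.2 fun e => hwQ c hc (by rw [← e, add_sub_cancel_left]))
      rwa [show u + (v + w - c) = v + (u + w) - c by abel] at this)
    (by
      have := (hF (v + w + w) (by simp)).2
      rwa [show u + u + (v + w + w) = v + (u + w) + (u + w) by abel] at this)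
    (fun p hp => by
      constructor
      · have := (hF (w - p) (by simp [hp])).1 (sub_ne_zero.2 fun e => hwP (e ▸ hp))
        rwa [← neg_mem_iff_of_neg_eq hV, show -(p - (u + w)) = u + (w - p) by abel]
      · have := (hF (w + p) (by simp [hp])).1
          (fun e => hwP' (by rwa [← eq_neg_of_add_eq_zero_right e]))
        rwa [show p + (u + w) = u + (w + p) by abel])
  exact ⟨_, _, (subset_insert _ _).trans (subset_insert _ _),
    (subset_insert _ _).trans (subset_insert _ _), hext, v + (u + w), mem_insert _ _,
    by rw [add_sub_cancel_left]; exact mem_insert _ _⟩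

lemma exists_extend_cover [IsAddTorsionFree G] (h : IsAdmissible V Q P) (hV : -V = V)
    (hlac : IsLacunary V) (x : G) :
    ∃ Q' P', Q ⊆ Q' ∧ P ⊆ P' ∧ IsAdmissible V Q' P' ∧ ∃ q ∈ Q', x - q ∈ V := by
  by_cases hx : ∃ q ∈ Q, x - q ∈ V
  · exact ⟨Q, P, subset_rfl, subset_rfl, h, hx⟩
  push Not at hx
  have hsub {a : G} {A : Set G} : A ⊆ insert a (insert (-a) A) :=
    (subset_insert _ _).trans (subset_insert _ _)
  rcases eq_or_ne x 0 with rfl | hx0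
  -- `0 = q + (-q) = (-q) + q` is never uniquely represented, so `±u` gets the certificate `u + v`.
  · obtain ⟨v, hv, -⟩ := hlac ∅ finite_empty
    obtain ⟨u, huV, hu, hF⟩ := hlac ({0, v} ∪ (v - ·) '' Q ∪ P ∪ -P)
      (((((finite_singleton _).insert _).union (h.finite_Q.image _)).union h.finite_P).union
        h.finite_P.neg)
    have hext := h.insert_pair hV (g := u + v) (q := u)
      (fun h0 => hu (by simp [h0]))
      (by rwa [add_sub_cancel_left])
      (fun c hc => by
        have := (hF (v - c) (by simp [hc])).1 (sub_ne_zero.2 fun e =>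
          hx (-c) (h.neg_mem hc) (by rwa [zero_sub, neg_neg, ← e]))
        rwa [← add_sub_assoc] at this)
      (by
        have := (hF v (by simp)).2
        rwa [show u + u + v = u + v + u by abel] at this)
      (fun p hp => by
        have hp0 := h.ne_of_forall_sub_notMem hx hp
        constructor
        · have := (hF (-p) (by simp [hp])).1 (neg_ne_zero.2 hp0)
          rwa [← neg_mem_iff_of_neg_eq hV, neg_sub, sub_eq_add_neg]
        · have := (hF p (by simp [hp])).1 hp0
          rwa [add_comm])
    exact ⟨_, _, hsub, hsub, hext, u, mem_insert _ _,
      by rwa [zero_sub, neg_mem_iff_of_neg_eq hV]⟩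
  · obtain ⟨u, huV, hu, hF⟩ := hlac ({x, -(x + x)} ∪ (· - x) '' P ∪ (fun p => -(p + x)) '' P)
      ((((finite_singleton _).insert _).union (h.finite_P.image _)).union (h.finite_P.image _))
    have hext := h.insert_pair hV (g := x) (q := x - u)
      (sub_ne_zero.2 fun e => hu (by simp [e]))
      (by rwa [sub_sub_cancel])
      hx
      (by
        have := (hF (-(x + x)) (by simp)).1
          (neg_ne_zero.2 fun e => hx0 (two_nsmul_eq_zero.1 (by rwa [two_nsmul])))
        rwa [← neg_mem_iff_of_neg_eq hV, show -(x + (x - u)) = u + -(x + x) by abel])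
      (fun p hp => by
        constructor
        · have := (hF (p - x) (by simp [hp])).1
            (sub_ne_zero.2 (h.ne_of_forall_sub_notMem hx hp))
          rwa [show p - (x - u) = u + (p - x) by abel]
        · have := (hF (-(p + x)) (by simp [hp])).1 (neg_ne_zero.2 fun e =>
            h.ne_of_forall_sub_notMem (h.neg_sub_notMem hV hx) hp (eq_neg_of_add_eq_zero_left e))
          rwa [← neg_mem_iff_of_neg_eq hV, show -(p + (x - u)) = u + -(p + x) by abel])
    exact ⟨_, _, hsub, hsub, hext, x - u, mem_insert _ _, by rwa [sub_sub_cancel]⟩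

end IsAdmissible

lemma exists_admissible_chain [Countable G] [IsAddTorsionFree G] (hV : -V = V)
    (hlac : IsLacunary V) :
    ∃ s : ℕ → Set G × Set G, Monotone s ∧ (∀ n, IsAdmissible V (s n).1 (s n).2) ∧
      (∀ x, ∃ n, ∃ q ∈ (s n).1, x - q ∈ V) ∧ ∀ v ∈ V, ∃ n, ∃ p ∈ (s n).2, p - v ∈ (s n).1 := by
  let S := {s : Set G × Set G // IsAdmissible V s.1 s.2}
  let 𝒟 : G ⊕ V → Order.Cofinal S := Sum.elim
    (fun x => ⟨{s | ∃ q ∈ s.1.1, x - q ∈ V}, fun s => by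
      obtain ⟨Q', P', hQ, hP, h', hx⟩ := s.2.exists_extend_cover hV hlac x
      exact ⟨⟨(Q', P'), h'⟩, hx, hQ, hP⟩⟩)
    (fun v => ⟨{s | ∃ p ∈ s.1.2, p - v.1 ∈ s.1.1}, fun s => by
      obtain ⟨Q', P', hQ, hP, h', hv⟩ := s.2.exists_extend_cert hV hlac v.2
      exact ⟨⟨(Q', P'), h'⟩, hv, hQ, hP⟩⟩)
  have := Encodable.ofCountable (G ⊕ V)
  let seq := Order.sequenceOfCofinals (⟨(∅, ∅), isAdmissible_empty⟩ : S) 𝒟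
  exact ⟨fun n => (seq n).1, fun _ _ h => Order.sequenceOfCofinals.monotone _ 𝒟 h,
    fun n => (seq n).2, fun x => ⟨_, Order.sequenceOfCofinals.encode_mem _ 𝒟 (.inl x)⟩,
    fun v hv => ⟨_, Order.sequenceOfCofinals.encode_mem _ 𝒟 (.inr ⟨v, hv⟩)⟩⟩

lemma IsUniqueRep.iUnion {s : ℕ → Set G × Set G} (hs : Monotone s)
    (hadm : ∀ n, IsAdmissible V (s n).1 (s n).2) {n : ℕ} {p q : G} (hp : p ∈ (s n).2)
    (h : IsUniqueRep V (s n).1 p q) : IsUniqueRep V (⋃ m, (s m).1) p q := by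
  refine ⟨mem_iUnion.2 ⟨n, h.1⟩, fun q' hq' => ?_⟩
  obtain ⟨m, hm⟩ := mem_iUnion.1 hq'
  have hn := hs (le_max_left n m)
  obtain ⟨q₀, hq₀⟩ := (hadm (max n m)).isUniqueRep p (hn.2 hp)
  obtain rfl : q = q₀ := (hq₀.2 q (hn.1 h.1)).1 ((h.2 q h.1).2 rfl)
  exact hq₀.2 q' ((hs (le_max_right n m)).1 hm)

theorem exists_neg_eq_isCoMinimalPair [Countable G] [IsAddTorsionFree G] (hV : -V = V)
    (hlac : IsLacunary V) : ∃ Q : Set G, Q = -Q ∧ (0 : G) ∉ Q ∧ IsCoMinimalPair V Q := by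
  obtain ⟨s, hs, hadm, hcover, hcert⟩ := exists_admissible_chain hV hlac
  have hrep {n : ℕ} {p : G} (hp : p ∈ (s n).2) : ∃ q, IsUniqueRep V (⋃ m, (s m).1) p q :=
    let ⟨q, hq⟩ := (hadm n).isUniqueRep p hp
    ⟨q, hq.iUnion hs hadm hp⟩
  refine ⟨⋃ n, (s n).1, by simp_rw [iUnion_neg, (hadm _).neg_eq],
    by simp [(hadm _).zero_notMem], ?_, fun v hv => ?_, fun q hq => ?_⟩
  · refine eq_univ_of_forall fun x => ?_
    obtain ⟨n, q, hq, hx⟩ := hcover x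
    exact ⟨x - q, hx, q, mem_iUnion.2 ⟨n, hq⟩, sub_add_cancel x q⟩
  · obtain ⟨n, p, hp, hpv⟩ := hcert v hv
    obtain ⟨q, hq⟩ := hrep hp
    obtain rfl : p - v = q := (hq.2 _ (mem_iUnion.2 ⟨n, hpv⟩)).1 (by rwa [sub_sub_cancel])
    simpa using hq.add_ne_univ.1
  · obtain ⟨n, hqn⟩ := mem_iUnion.1 hq
    obtain ⟨p, hp, hpq⟩ := (hadm n).exists_cert q hqn
    obtain ⟨q', hq'⟩ := hrep hp
    obtain rfl : q = q' := (hq'.2 q hq).1 hpq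
    exact hq'.add_ne_univ.2

end Greedy

section Lacunary

variable {α : Type*} [AddCommGroup α] [LinearOrder α] [IsOrderedAddMonoid α] {t : ℕ → α}

lemma notMem_range_union_neg_of_lt_of_lt (hmono : StrictMono t) (hpos : 0 < t 0) {j : ℕ}
    {a : α} (h₁ : t j < a) (h₂ : a < t (j + 1)) : a ∉ range t ∪ -range t := by
  rintro (⟨b, rfl⟩ | ⟨b, hb⟩)
  · have := hmono.lt_iff_lt.1 h₁
    have := hmono.lt_iff_lt.1 h₂
    omega
  · have := hmono.monotone b.zero_le
    have := hmono.monotone j.zero_le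
    grind

theorem isLacunary_range_union_neg (hmono : StrictMono t) (hpos : 0 < t 0)
    (hgrow : ∀ n, 3 • t n < t (n + 1)) (hcof : ∀ a, ∃ n, a < t n) :
    IsLacunary (range t ∪ -range t) := by
  intro F hF
  obtain ⟨η, hη⟩ := (hF.image abs).bddAbove
  have hbound {f : α} (hf : f ∈ F) : -η ≤ f ∧ f ≤ η := abs_le.1 (hη (mem_image_of_mem _ hf))
  obtain ⟨N, hN⟩ := hcof η
  have h₀ : 0 < t N := hpos.trans_le (hmono.monotone N.zero_le)
  have h₁ := hgrow N
  have h₂ := hgrow (N + 1)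
  refine ⟨t (N + 1), .inl ⟨_, rfl⟩, fun hu => ?_, fun f hf => ⟨fun hf₀ => ?_, ?_⟩⟩
  · have := hbound hu
    grind
  · have := hbound hf
    rcases hf₀.lt_or_gt with hf_neg | hf_pos
    · exact notMem_range_union_neg_of_lt_of_lt hmono hpos (j := N) (by grind) (by grind)
    · exact notMem_range_union_neg_of_lt_of_lt hmono hpos (j := N + 1) (by grind) (by grind)
  · have := hbound hf
    exact notMem_range_union_neg_of_lt_of_lt hmono hpos (j := N + 1) (by grind) (by grind)

end Lacunary

lemma exists_lt_of_three_nsmul_lt {d : ℕ} (hd : 0 < d) {t : ℕ → Zd d}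
    (hgrow : ∀ n, 3 • t n < t (n + 1)) (hcoord : ∃ n, 0 < ofLex (t n) ⟨0, hd⟩) (β : Zd d) :
    ∃ n, β < t n := by
  obtain ⟨n₀, h₀⟩ := hcoord
  let f : Zd d → ℤ := fun x => ofLex x ⟨0, hd⟩
  have hf : Monotone f := fun x y h =>
    Pi.apply_le_of_toLex (x := ofLex x) (y := ofLex y) h fun j hj => (Nat.not_lt_zero _ hj).elim
  have hgrowf (n : ℕ) : 3 * f (t n) ≤ f (t (n + 1)) := hf (hgrow n).le
  have hlin (k : ℕ) : (k : ℤ) < f (t (n₀ + k)) := by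
    induction k with
    | zero => exact h₀
    | succ k ih =>
      have := hgrowf (n₀ + k)
      rw [← add_assoc]
      omega
  refine ⟨n₀ + (f β).toNat, lt_of_not_ge fun h => ?_⟩
  have := hf h
  have := hlin (f β).toNat
  omega

theorem stmt11 {d : ℕ} (hd : 0 < d) (t : ℕ → Zd d) (hmono : StrictMono t)
    (hpos : 0 < t 0) (hgrow : ∀ n : ℕ, 3 • t n < t (n + 1))
    (hcoord : ∃ n : ℕ, ∀ i : Fin d, 0 < ofLex (t n) i) :
    ∃ Q : Set (Zd d), Q = -Q ∧ (0 : Zd d) ∉ Q ∧ IsCoMinimalPair (Vset t) Q := by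
  have : Countable (Zd d) := inferInstanceAs (Countable (Fin d → ℤ))
  have hcof := exists_lt_of_three_nsmul_lt hd hgrow (hcoord.imp fun _ h => h _)
  refine exists_neg_eq_isCoMinimalPair ?_ (isLacunary_range_union_neg hmono hpos hgrow hcof)
  rw [Vset, union_neg, neg_neg, union_comm]
end

section
/- Let t_0 < t_1 < ⋯ in ℤ^d (lexicographic order) with t_0 > 0, t_n ≥ 2t_{n-1} for all n ≥ 1, and some t_n with all coordinates positive. Then the set T = {t_n : n ≥ 0} is a minimal complement to some subset of ℤ^d \ ℤ^d_{≥0}. -/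
/-!
The witnesses `w₀ = -t₀`, `w_{m+1} = t_{m+1} - t_m` satisfy `t_{m-1} ≤ w_m < t_m`, so `w_m - t_n ≥ 0`
for `n < m`, while `w_m - t_m` (that is `-t_{m-1}`, resp. `-2t₀`) is negative. Let `B` be the negative
elements minus all collisions `w_m - t_k` with `m < k`: then `w_m` has the single representation
`t_m + (w_m - t_m)` in `T + B`, which is minimality. By doubling, the collisions of level `k` lie in
`{-t₀ - t_k} ∪ (-t_k, -t_{k-1} - t_{k-2}]`; this avoids the residues `-t_j`, `-2t₀`, and, for `g` not
a witness and `|g| < t_N`, also `g - t_{N+2}`, so `T + B` is everything. In `ℤ^d`, `t` is cofinal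
because the first coordinates of the `t_n` eventually grow without bound.
-/

open Pointwise

open Set

section

variable {G : Type*} [AddCommGroup G] [LinearOrder G] [IsOrderedAddMonoid G]

structure IsDoublingSeq (t : ℕ → G) : Prop where
  pos_zero : 0 < t 0
  add_self_le : ∀ n, t n + t n ≤ t (n + 1)

def witness (t : ℕ → G) : ℕ → G
  | 0 => -t 0
  | m + 1 => t (m + 1) - t m

def collisionSet (t : ℕ → G) : Set G :=
  {x | ∃ m k, m < k ∧ witness t m - t k = x}

def complementSet (t : ℕ → G) : Set G :=
  Iio 0 \ collisionSet t

namespace IsDoublingSeq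

variable {t : ℕ → G}

theorem pos (ht : IsDoublingSeq t) : ∀ n, 0 < t n
  | 0 => ht.pos_zero
  | n + 1 => (add_pos (ht.pos n) (ht.pos n)).trans_le (ht.add_self_le n)

theorem strictMono (ht : IsDoublingSeq t) : StrictMono t :=
  strictMono_nat_of_lt_succ fun n => (lt_add_of_pos_right _ (ht.pos n)).trans_le (ht.add_self_le n)

theorem add_le_succ (ht : IsDoublingSeq t) {j k : ℕ} (h : j ≤ k) : t j + t k ≤ t (k + 1) :=
  (add_le_add_left (ht.strictMono.monotone h) _).trans (ht.add_self_le k)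

theorem notMem_Ioo (ht : IsDoublingSeq t) (j k : ℕ) : t j ∉ Ioo (t k) (t (k + 1)) := by
  rintro ⟨h₁, h₂⟩
  have := ht.strictMono.lt_iff_lt.1 h₁
  have := ht.strictMono.lt_iff_lt.1 h₂
  omega

theorem witness_lt (ht : IsDoublingSeq t) : ∀ m, witness t m < t m
  | 0 => neg_lt_self ht.pos_zero
  | m + 1 => sub_lt_self _ (ht.pos m)

theorem le_witness_succ (ht : IsDoublingSeq t) (m : ℕ) : t m ≤ witness t (m + 1) :=
  le_sub_iff_add_le.2 (ht.add_self_le m)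

theorem witness_strictMono (ht : IsDoublingSeq t) : StrictMono (witness t) :=
  strictMono_nat_of_lt_succ fun m => (ht.witness_lt m).trans_le (ht.le_witness_succ m)

theorem neg_add_le_witness_sub (ht : IsDoublingSeq t) (m k : ℕ) :
    -(t 0 + t k) ≤ witness t m - t k := by
  rw [neg_add']
  exact sub_le_sub_right (ht.witness_strictMono.monotone m.zero_le) _

theorem neg_lt_witness_succ_sub (ht : IsDoublingSeq t) (m k : ℕ) :
    -t k < witness t (m + 1) - t k := by
  rw [neg_eq_zero_sub]
  exact sub_lt_sub_right ((ht.pos m).trans_le (ht.le_witness_succ m)) _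

theorem witness_sub_le (ht : IsDoublingSeq t) {m j : ℕ} (h : m < j + 2) :
    witness t m - t (j + 2) ≤ -(t (j + 1) + t j) :=
  calc witness t m - t (j + 2)
      ≤ (t (j + 1) - t j) - (t (j + 1) + t (j + 1)) :=
        sub_le_sub (ht.witness_strictMono.monotone (by omega : m ≤ j + 1)) (ht.add_self_le _)
    _ = -(t (j + 1) + t j) := by abel

theorem witness_sub_nonneg (ht : IsDoublingSeq t) {m n : ℕ} (h : n < m) :
    0 ≤ witness t m - t n := by
  obtain ⟨m, rfl⟩ : ∃ m', m = m' + 1 := ⟨m - 1, by omega⟩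
  exact sub_nonneg.2 (le_sub_iff_add_le.2 (ht.add_le_succ (by omega)))

theorem neg_notMem_collisionSet (ht : IsDoublingSeq t) (j : ℕ) : -t j ∉ collisionSet t := by
  rintro ⟨_ | m, k, hk, hx⟩
  · have hj : t j = t 0 + t k := by
      rw [← neg_neg (t j), ← hx, witness, neg_sub', sub_neg_eq_add, neg_neg]
    refine ht.notMem_Ioo j k ⟨hj ▸ lt_add_of_pos_left _ ht.pos_zero, ?_⟩
    calc t j = t 0 + t k := hj
      _ < t k + t k := add_lt_add_of_lt_of_le (ht.strictMono hk) le_rfl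
      _ ≤ t (k + 1) := ht.add_self_le k
  · obtain ⟨k, rfl⟩ : ∃ k', k = k' + 2 := ⟨k - 2, by omega⟩
    refine ht.notMem_Ioo j (k + 1) ⟨?_, ?_⟩
    · have := hx ▸ ht.witness_sub_le hk
      exact (lt_add_of_pos_right _ (ht.pos k)).trans_le (neg_le_neg_iff.1 this)
    · exact neg_lt_neg_iff.1 (hx ▸ ht.neg_lt_witness_succ_sub m (k + 2))

theorem neg_add_self_notMem_collisionSet (ht : IsDoublingSeq t) :
    -(t 0 + t 0) ∉ collisionSet t := by
  rintro ⟨_ | m, k, hk, hx⟩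
  · have : t k = t 0 := by
      rw [witness, neg_add', sub_right_inj] at hx
      exact hx
    exact hk.ne' (ht.strictMono.injective this)
  · obtain ⟨k, rfl⟩ : ∃ k', k = k' + 2 := ⟨k - 2, by omega⟩
    have := neg_le_neg_iff.1 (hx ▸ ht.witness_sub_le hk)
    exact this.not_gt (add_lt_add_of_lt_of_le (ht.strictMono k.succ_pos)
      (ht.strictMono.monotone k.zero_le))

theorem witness_sub_self_mem (ht : IsDoublingSeq t) :
    ∀ m, witness t m - t m ∈ complementSet t
  | 0 => by
    rw [witness, ← neg_add']
    exact ⟨neg_neg_of_pos (add_pos ht.pos_zero ht.pos_zero),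
      ht.neg_add_self_notMem_collisionSet⟩
  | m + 1 => by
    rw [witness, sub_sub_cancel_left]
    exact ⟨neg_neg_of_pos (ht.pos m), ht.neg_notMem_collisionSet m⟩

theorem witness_sub_notMem (ht : IsDoublingSeq t) {m n : ℕ} (h : n ≠ m) :
    witness t m - t n ∉ complementSet t := by
  rcases h.lt_or_gt with h | h
  · exact fun hx => (ht.witness_sub_nonneg h).not_gt hx.1
  · exact fun hx => hx.2 ⟨m, n, h, rfl⟩

theorem sub_notMem_collisionSet (ht : IsDoublingSeq t) {g : G} {N : ℕ}
    (hg : g ∉ range (witness t)) (hN : g < t N) (hN' : -g < t N) :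
    g - t (N + 2) ∉ collisionSet t := by
  rintro ⟨m, k, hmk, hx⟩
  rcases lt_trichotomy k (N + 2) with hk | rfl | hk
  · have hk' : t 0 + t k + t N ≤ t (N + 2) :=
      calc t 0 + t k + t N = t k + (t 0 + t N) := by abel
        _ ≤ t k + t (N + 1) := add_le_add_right (ht.add_le_succ N.zero_le) _
        _ ≤ t (N + 2) := ht.add_le_succ (by omega)
    refine (hx ▸ ht.neg_add_le_witness_sub m k).not_gt ?_
    calc g - t (N + 2) < t N - (t 0 + t k + t N) :=
          (sub_lt_sub_right hN _).trans_le (sub_le_sub_left hk' _)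
      _ = -(t 0 + t k) := by abel
  · exact hg ⟨m, sub_left_inj.1 hx⟩
  · obtain ⟨j, rfl⟩ : ∃ j, k = j + 2 := ⟨k - 2, by omega⟩
    have hj : -(t (j + 1) + t j) ≤ -(t (N + 2) + t N) :=
      neg_le_neg (add_le_add (ht.strictMono.monotone (by omega))
        (ht.strictMono.monotone (by omega)))
    have hg' : g ≤ -t N :=
      calc g = (g - t (N + 2)) + t (N + 2) := by abel
        _ ≤ -(t (N + 2) + t N) + t (N + 2) :=
          add_le_add_left ((hx ▸ ht.witness_sub_le hmk).trans hj) _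
        _ = -t N := by abel
    exact hN'.not_ge (le_neg.1 hg')

theorem exists_sub_mem_complementSet (ht : IsDoublingSeq t) (hunb : ∀ x, ∃ n, x < t n)
    (g : G) : ∃ n, g - t n ∈ complementSet t := by
  by_cases hg : g ∈ range (witness t)
  · obtain ⟨m, rfl⟩ := hg
    exact ⟨m, ht.witness_sub_self_mem m⟩
  obtain ⟨N, hN, hN'⟩ : ∃ N, g < t N ∧ -g < t N := by
    obtain ⟨a, ha⟩ := hunb g
    obtain ⟨b, hb⟩ := hunb (-g)
    exact ⟨max a b, ha.trans_le (ht.strictMono.monotone (le_max_left a b)),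
      hb.trans_le (ht.strictMono.monotone (le_max_right a b))⟩
  exact ⟨N + 2, sub_neg.2 (hN.trans (ht.strictMono (by omega))),
    ht.sub_notMem_collisionSet hg hN hN'⟩

theorem range_add_complementSet (ht : IsDoublingSeq t) (hunb : ∀ x, ∃ n, x < t n) :
    range t + complementSet t = univ :=
  eq_univ_of_forall fun g =>
    let ⟨n, hn⟩ := ht.exists_sub_mem_complementSet hunb g
    ⟨t n, mem_range_self n, g - t n, hn, add_sub_cancel _ _⟩

theorem range_diff_add_complementSet_ne_univ (ht : IsDoublingSeq t) (m : ℕ) :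
    (range t \ {t m}) + complementSet t ≠ univ := by
  intro h
  obtain ⟨_, ⟨⟨n, rfl⟩, hnm⟩, b, hb, hsum⟩ := h.symm ▸ mem_univ (witness t m)
  have hn : n ≠ m := fun h => hnm (h ▸ rfl)
  exact ht.witness_sub_notMem hn (by rwa [← hsum, add_sub_cancel_left])

end IsDoublingSeq

end

theorem Zd.lt_of_head_lt {d : ℕ} (hd : 0 < d) {x y : Zd d}
    (h : ofLex x ⟨0, hd⟩ < ofLex y ⟨0, hd⟩) : x < y :=
  ⟨⟨0, hd⟩, fun _ hj => (Nat.not_lt_zero _ hj).elim, h⟩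

theorem Zd.head_le {d : ℕ} (hd : 0 < d) {x y : Zd d} (h : x ≤ y) :
    ofLex x ⟨0, hd⟩ ≤ ofLex y ⟨0, hd⟩ :=
  Pi.apply_le_of_toLex h fun _ hj => (Nat.not_lt_zero _ hj).elim

theorem IsDoublingSeq.exists_gt_of_head_pos {d : ℕ} (hd : 0 < d) {t : ℕ → Zd d}
    (ht : IsDoublingSeq t) (hhead : ∃ n, 0 < ofLex (t n) ⟨0, hd⟩) (x : Zd d) :
    ∃ n, x < t n := by
  obtain ⟨N, hN⟩ := hhead
  have hgrow : ∀ k : ℕ, (k : ℤ) < ofLex (t (N + k)) ⟨0, hd⟩ := by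
    intro k
    induction k with
    | zero => exact hN
    | succ k ih =>
      have := Zd.head_le hd (ht.add_self_le (N + k))
      change ofLex (t (N + k)) _ + ofLex (t (N + k)) _ ≤ ofLex (t (N + (k + 1))) _ at this
      omega
  exact ⟨_, Zd.lt_of_head_lt hd ((Int.self_le_toNat _).trans_lt (hgrow (ofLex x ⟨0, hd⟩).toNat))⟩

theorem stmt13_general {d : ℕ} (hd : 0 < d) (t : ℕ → Zd d)
    (hpos : 0 < t 0) (hgrow : ∀ n : ℕ, 2 • t n ≤ t (n + 1))
    (hcoord : ∃ n : ℕ, ∀ i : Fin d, 0 < ofLex (t n) i) :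
    ∃ B : Set (Zd d), B ⊆ {x : Zd d | ¬ (0 : Zd d) ≤ x} ∧ B.Nonempty ∧
      Set.range t + B = Set.univ ∧
      ∀ a ∈ Set.range t, (Set.range t \ {a}) + B ≠ Set.univ := by
  have ht : IsDoublingSeq t := ⟨hpos, fun n => two_nsmul (t n) ▸ hgrow n⟩
  refine ⟨complementSet t, fun x hx => not_le.2 hx.1, ⟨_, ht.witness_sub_self_mem 0⟩,
    ht.range_add_complementSet (ht.exists_gt_of_head_pos hd (hcoord.imp fun _ h => h _)), ?_⟩
  rintro _ ⟨m, rfl⟩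
  exact ht.range_diff_add_complementSet_ne_univ m

theorem stmt13 {d : ℕ} (hd : 0 < d) (t : ℕ → Zd d) (hmono : StrictMono t)
    (hpos : 0 < t 0) (hgrow : ∀ n : ℕ, 2 • t n ≤ t (n + 1))
    (hcoord : ∃ n : ℕ, ∀ i : Fin d, 0 < ofLex (t n) i) :
    ∃ B : Set (Zd d), B ⊆ {x : Zd d | ¬ (0 : Zd d) ≤ x} ∧ B.Nonempty ∧
      Set.range t + B = Set.univ ∧
      ∀ a ∈ Set.range t, (Set.range t \ {a}) + B ≠ Set.univ :=
  stmt13_general hd t hpos hgrow hcoord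
end

section
/- Let t_0 < t_1 < ⋯ in ℤ^d (lexicographic order) with t_0 > 0, t_n ≥ 2t_{n-1} for all n ≥ 1, some t_n with all coordinates positive, and suppose at least one coordinate of the sequence t_n − 2t_{n-1} tends to infinity. Then T = {t_n : n ≥ 0} forms a co-minimal pair with some subset S of ℤ^d \ ℤ^d_{≥0}. -/
open Pointwise

/-!
`S` is built greedily along an enumeration of the group: each element not yet in `T + S` is
covered by a new shift `s = x - t_n` with `n` large, chosen so that the translate `T + s` misses
all previous translates. The translates being pairwise disjoint, every element of `T + S` has a
unique representation `t + s`, and a complementing pair with unique representations is co-minimal.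

The new translate is disjoint from `T + s'` as soon as `t_n + (s' - x)` is not a difference of
two terms of `T`. By lacunarity, a difference `t_m - t_{m'}` lies in `[t_{m-1}, t_m)`, so for
large `n` the only candidates are `t_n - t_{m'}` and `t_{n+1} - t_n`; the first is excluded
because `x ∉ T + s'`, the second because `t_{n+1} - 2 t_n` takes each value only finitely often.
-/

open Set Filter

section DirectAdd

variable {G : Type*}

def IsDirectAdd [Add G] (A B : Set G) : Prop :=
  ∀ a ∈ A, ∀ a' ∈ A, ∀ b ∈ B, ∀ b' ∈ B, a + b = a' + b' → b = b'

theorem IsDirectAdd.insert [Add G] {A B : Set G} (h : IsDirectAdd A B) {s : G}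
    (hs : ∀ b ∈ B, ∀ a ∈ A, ∀ a' ∈ A, a + s ≠ a' + b) :
    IsDirectAdd A (insert s B) := by
  rintro a ha a' ha' b (rfl | hb) b' (rfl | hb') heq
  · rfl
  · exact absurd heq (hs b' hb' a ha a' ha')
  · exact absurd heq.symm (hs b hb a' ha' a ha)
  · exact h a ha a' ha' b hb b' hb' heq

theorem IsCoMinimalPair.of_isDirectAdd [AddCommGroup G] {A B : Set G} (hcover : A + B = univ)
    (hdirect : IsDirectAdd A B) : IsCoMinimalPair A B := by
  obtain ⟨a₀, ha₀, b₀, hb₀, -⟩ : (0 : G) ∈ A + B := hcover ▸ mem_univ 0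
  refine ⟨hcover, fun a ha hA => ?_, fun b hb hB => ?_⟩
  · obtain ⟨a', ha', b, hb, heq⟩ : a + b₀ ∈ (A \ {a}) + B := hA ▸ mem_univ _
    have hbb : b = b₀ := hdirect a' ha'.1 a ha b hb b₀ hb₀ heq
    exact ha'.2 (add_right_cancel (hbb ▸ heq))
  · obtain ⟨a, ha, b', hb', heq⟩ : a₀ + b ∈ A + (B \ {b}) := hB ▸ mem_univ _
    exact hb'.2 (hdirect a ha a₀ ha₀ b' hb'.1 b hb heq)

theorem exists_isDirectAdd_add_eq_univ [AddGroup G] [Countable G] {A P : Set G}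
    (hext : ∀ F : Set G, F.Finite → ∀ x ∉ A + F,
      ∃ s ∈ P, x - s ∈ A ∧ ∀ s' ∈ F, ∀ a ∈ A, ∀ a' ∈ A, a + s ≠ a' + s') :
    ∃ S ⊆ P, A + S = univ ∧ IsDirectAdd A S := by
  classical
  choose! step hstepP hstepA hstepDisj using hext
  obtain ⟨e, he⟩ := exists_surjective_nat G
  let F : ℕ → Set G := fun k =>
    Nat.rec (motive := fun _ => Set G) ∅
      (fun k Fk => if e k ∈ A + Fk then Fk else insert (step Fk (e k)) Fk) k
  have hF_succ (k : ℕ) : F (k + 1) =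
      if e k ∈ A + F k then F k else insert (step (F k) (e k)) (F k) := rfl
  have hF_mono : Monotone F := monotone_nat_of_le_succ fun k => by
    rw [hF_succ]; split_ifs
    exacts [subset_rfl, subset_insert _ _]
  have hF_inv (k : ℕ) : (F k).Finite ∧ F k ⊆ P ∧ IsDirectAdd A (F k) := by
    induction k with
    | zero => exact ⟨finite_empty, empty_subset _, by simp [F, IsDirectAdd]⟩
    | succ k ih =>
      obtain ⟨hfin, hP, hdirect⟩ := ih
      rw [hF_succ]; split_ifs with hk
      · exact ⟨hfin, hP, hdirect⟩
      · exact ⟨hfin.insert _, insert_subset (hstepP _ hfin _ hk) hP,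
          hdirect.insert (hstepDisj _ hfin _ hk)⟩
  have hF_cover (k : ℕ) : e k ∈ A + F (k + 1) := by
    rw [hF_succ]; split_ifs with hk
    · exact hk
    · exact ⟨_, hstepA _ (hF_inv k).1 _ hk, _, mem_insert _ _, sub_add_cancel _ _⟩
  refine ⟨⋃ k, F k, iUnion_subset fun k => (hF_inv k).2.1, ?_, ?_⟩
  · refine eq_univ_of_forall fun x => ?_
    obtain ⟨k, rfl⟩ := he x
    exact add_subset_add_left (subset_iUnion F (k + 1)) (hF_cover k)
  · intro a ha a' ha' b hb b' hb' heq
    obtain ⟨k, hk⟩ := mem_iUnion.1 hb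
    obtain ⟨k', hk'⟩ := mem_iUnion.1 hb'
    exact (hF_inv (max k k')).2.2 a ha a' ha' b (hF_mono (le_max_left k k') hk)
      b' (hF_mono (le_max_right k k') hk') heq

end DirectAdd

theorem succ_nsmul_le_of_two_nsmul_le {M : Type*} [AddCommMonoid M] [PartialOrder M]
    [IsOrderedAddMonoid M] {t : ℕ → M} (hmono : Monotone t)
    (hgrow : ∀ n, 2 • t n ≤ t (n + 1)) (n₀ k : ℕ) :
    (k + 1) • t n₀ ≤ t (n₀ + k) := by
  induction k with
  | zero => simp
  | succ k ih =>
    calc (k + 1 + 1) • t n₀ = (k + 1) • t n₀ + t n₀ := succ_nsmul _ _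
      _ ≤ t (n₀ + k) + t (n₀ + k) := add_le_add ih (hmono (Nat.le_add_right n₀ k))
      _ = 2 • t (n₀ + k) := (two_nsmul _).symm
      _ ≤ t (n₀ + (k + 1)) := hgrow _

section Lacunary

variable {α : Type*} [AddCommGroup α] [LinearOrder α] [IsOrderedAddMonoid α] {t : ℕ → α}
  (hmono : StrictMono t) (hpos : 0 < t 0) (hgrow : ∀ n, 2 • t n ≤ t (n + 1))
include hmono hpos hgrow

theorem sub_mem_Ico_of_two_nsmul_le {m m' : ℕ} (h : m' ≤ m) :
    t (m + 1) - t m' ∈ Ico (t m) (t (m + 1)) := by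
  refine ⟨le_sub_iff_add_le.2 ?_,
    sub_lt_self _ (hpos.trans_le (hmono.monotone (Nat.zero_le m')))⟩
  calc t m + t m' ≤ t m + t m := add_le_add_right (hmono.monotone h) _
    _ = 2 • t m := (two_nsmul _).symm
    _ ≤ t (m + 1) := hgrow m

theorem eq_neg_or_eq_of_sub_eq_add {c : α} {p m m' : ℕ} (hc : |c| < t p)
    (h : t m - t m' = t (p + 1) + c) : c = -t m' ∨ t (p + 2) - 2 • t (p + 1) = c := by
  obtain ⟨hc_lo, hc_hi⟩ := abs_lt.1 hc
  have hlo : t p < t (p + 1) + c := sub_lt_iff_lt_add.1 <|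
    calc t p - c < t p + t p := by rw [sub_eq_add_neg]; exact add_lt_add_right (neg_lt.1 hc_lo) _
      _ = 2 • t p := (two_nsmul _).symm
      _ ≤ t (p + 1) := hgrow p
  have hhi : t (p + 1) + c < t (p + 2) :=
    calc t (p + 1) + c < t (p + 1) + t (p + 1) :=
          add_lt_add_right (hc_hi.trans (hmono p.lt_succ_self)) _
      _ = 2 • t (p + 1) := (two_nsmul _).symm
      _ ≤ t (p + 2) := hgrow _
  have hm'm : m' < m :=
    hmono.lt_iff_lt.1 (sub_pos.1 (h ▸ (hpos.trans_le (hmono.monotone p.zero_le)).trans hlo))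
  obtain ⟨q, rfl⟩ : ∃ q, m = q + 1 := ⟨m - 1, by omega⟩
  obtain ⟨hq_lo, hq_hi⟩ := sub_mem_Ico_of_two_nsmul_le hmono hpos hgrow (Nat.le_of_lt_succ hm'm)
  rw [h] at hq_lo hq_hi
  have hq_lt : q < p + 2 := hmono.lt_iff_lt.1 (hq_lo.trans_lt hhi)
  have hp_lt : p < q + 1 := hmono.lt_iff_lt.1 (hlo.trans hq_hi)
  obtain rfl | rfl : q = p ∨ q = p + 1 := by omega
  · rw [sub_eq_add_neg] at h
    exact .inl (add_left_cancel h).symm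
  · have hp_lt_m' : t p < t m' :=
      calc t p < t (p + 1) - c := lt_sub_iff_add_lt.2 <|
            calc t p + c < t p + t p := add_lt_add_right hc_hi _
              _ = 2 • t p := (two_nsmul _).symm
              _ ≤ t (p + 1) := hgrow p
        _ ≤ t (p + 2) - (t (p + 1) + c) := le_sub_iff_add_le.2 <| by
            rw [show t (p + 1) - c + (t (p + 1) + c) = 2 • t (p + 1) by abel]; exact hgrow _
        _ = t m' := by rw [← h]; abel
    obtain rfl : m' = p + 1 := by have := hmono.lt_iff_lt.1 hp_lt_m'; omega
    exact .inr (by rw [← sub_eq_zero] at h ⊢; rw [← h]; abel)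

variable (htop : Tendsto t atTop atTop)
include htop

theorem eventually_add_ne_sub {c : α} (hc : ∀ m, c ≠ -t m)
    (hgap : ∀ᶠ n in atTop, t (n + 1) - 2 • t n ≠ c) :
    ∀ᶠ n in atTop, ∀ m m', t m - t m' ≠ t n + c := by
  have : Nontrivial α := ⟨⟨0, t 0, hpos.ne⟩⟩
  rw [← map_add_atTop_eq_nat 1, eventually_map]
  filter_upwards [htop.eventually_gt_atTop |c|, (tendsto_add_atTop_nat 1).eventually hgap]
    with p hp hgap_p m m' h
  rcases eq_neg_or_eq_of_sub_eq_add hmono hpos hgrow hp h with h | h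
  exacts [hc m' h, hgap_p h]

theorem exists_neg_shift_disjoint (hgap : ∀ c, ∀ᶠ n in atTop, t (n + 1) - 2 • t n ≠ c)
    {F : Set α} (hF : F.Finite) {x : α} (hx : x ∉ range t + F) :
    ∃ s ∈ Iio 0, x - s ∈ range t ∧
      ∀ s' ∈ F, ∀ a ∈ range t, ∀ a' ∈ range t, a + s ≠ a' + s' := by
  have : Nontrivial α := ⟨⟨0, t 0, hpos.ne⟩⟩
  have hsep : ∀ᶠ n in atTop, ∀ s' ∈ F, ∀ m m', t m - t m' ≠ t n + (s' - x) := by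
    refine hF.eventually_all.2 fun s' hs' => eventually_add_ne_sub hmono hpos hgrow htop
      (fun m h => hx ⟨t m, mem_range_self m, s', hs', ?_⟩) (hgap _)
    show t m + s' = x
    rw [← sub_eq_zero] at h ⊢; rw [← h]; abel
  obtain ⟨n, hn, hxn⟩ := (hsep.and (htop.eventually_gt_atTop x)).exists
  refine ⟨x - t n, sub_neg.2 hxn, by simp, ?_⟩
  rintro s' hs' _ ⟨m, rfl⟩ _ ⟨m', rfl⟩ h
  exact hn s' hs' m m' (by rw [← sub_eq_zero] at h ⊢; rw [← h]; abel)

theorem exists_isCoMinimalPair_range [Countable α]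
    (hgap : ∀ c, ∀ᶠ n in atTop, t (n + 1) - 2 • t n ≠ c) :
    ∃ S ⊆ Iio 0, IsCoMinimalPair (range t) S := by
  obtain ⟨S, hS, hcover, hdirect⟩ := exists_isDirectAdd_add_eq_univ fun _ hF _ hx =>
    exists_neg_shift_disjoint hmono hpos hgrow htop hgap hF hx
  exact ⟨S, hS, .of_isDirectAdd hcover hdirect⟩

end Lacunary

theorem Zd.tendsto_nsmul_atTop {d : ℕ} (hd : 0 < d) {v : Zd d} (hv : 0 < ofLex v ⟨0, hd⟩) :
    Tendsto (fun k : ℕ => k • v) atTop atTop := by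
  refine tendsto_atTop_atTop.2 fun x =>
    ⟨(ofLex x ⟨0, hd⟩).toNat + 1, fun k hk => le_of_lt ?_⟩
  refine ⟨⟨0, hd⟩, fun j hj => absurd hj (Nat.not_lt_zero j), ?_⟩
  show ofLex x ⟨0, hd⟩ < k * ofLex v ⟨0, hd⟩
  have := Int.self_le_toNat (ofLex x ⟨0, hd⟩)
  nlinarith

theorem Zd.tendsto_atTop_of_two_nsmul_le {d : ℕ} (hd : 0 < d) {t : ℕ → Zd d}
    (hmono : Monotone t) (hgrow : ∀ n, 2 • t n ≤ t (n + 1)) {n₀ : ℕ}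
    (hn₀ : 0 < ofLex (t n₀) ⟨0, hd⟩) :
    Tendsto t atTop atTop := by
  refine (tendsto_add_atTop_iff_nat n₀).1 <| tendsto_atTop_mono (fun k => ?_)
    ((Zd.tendsto_nsmul_atTop hd hn₀).comp (tendsto_add_atTop_nat 1))
  simpa [add_comm n₀] using succ_nsmul_le_of_two_nsmul_le hmono hgrow n₀ k

theorem stmt14 {d : ℕ} (hd : 0 < d) (t : ℕ → Zd d) (hmono : StrictMono t)
    (hpos : 0 < t 0) (hgrow : ∀ n : ℕ, 2 • t n ≤ t (n + 1))
    (hcoord : ∃ n : ℕ, ∀ i : Fin d, 0 < ofLex (t n) i)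
    (htend : ∃ i : Fin d,
      Filter.Tendsto (fun n : ℕ => (ofLex (t (n + 1) - 2 • t n) : Fin d → ℤ) i)
        Filter.atTop Filter.atTop) :
    ∃ S : Set (Zd d), S ⊆ {x : Zd d | ¬ (0 : Zd d) ≤ x} ∧
      IsCoMinimalPair (Set.range t) S := by
  obtain ⟨n₀, hn₀⟩ := hcoord
  obtain ⟨i, hi⟩ := htend
  have : Countable (Zd d) := Countable.of_equiv _ toLex
  have htop := Zd.tendsto_atTop_of_two_nsmul_le hd hmono.monotone hgrow (hn₀ ⟨0, hd⟩)
  have hgap (c : Zd d) : ∀ᶠ n in atTop, t (n + 1) - 2 • t n ≠ c :=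
    (hi.eventually_ne_atTop (ofLex c i)).mono fun n hn h => hn (by rw [h])
  obtain ⟨S, hS, hpair⟩ := exists_isCoMinimalPair_range hmono hpos hgrow htop hgap
  exact ⟨S, fun s hs => not_le.2 (hS hs), hpair⟩
end

section
/- There exist uncountably many subsets of ℤ^d contained in ℤ^d_{≥0} (lexicographic order), each of which forms a co-minimal pair together with some subset of ℤ^d avoiding ℤ^d_{≥0}. -/
open Pointwise

/-!
Fix signs `ε i = ±1`. The sums `∑ i ∈ F, ε i * 2 ^ i` over `F ⊆ range n` are pairwise distinct
(the top digit `±2 ^ n` outweighs any difference of lower sums) and lie in an interval of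
`2 ^ n` integers, so they fill it. If both signs occur infinitely often these intervals exhaust
`ℤ`, and splitting `F` by sign writes `ℤ` as a direct sum `A ⊕ B` with `A ≥ 0 ≥ B`. A direct sum
decomposition is co-minimal; shifting by `1` and pulling back along the first coordinate gives
such a pair in `ℤ^d` with `A` lexicographically nonnegative and `B` negative. Since
`2 ^ i ∈ A ↔ ε i = 1`, different sign sequences give different `A`, and there are uncountably
many admissible ones, e.g. `ε (2k+1) = -ε (2k)` with `ε (2k)` free.
-/

namespace AddSubgroup

variable {G : Type*}

theorem isComplement_iff_add_eq_univ_and_left_cancel [AddGroup G] {S T : Set G} :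
    IsComplement S T ↔ S + T = Set.univ ∧
      ∀ a ∈ S, ∀ b ∈ T, ∀ a' ∈ S, ∀ b' ∈ T, a + b = a' + b' → a = a' := by
  constructor
  · intro h
    refine ⟨Set.eq_univ_of_forall fun g => ?_, fun a ha b hb a' ha' b' hb' hab => ?_⟩
    · obtain ⟨⟨a, b⟩, hab⟩ := h.2 g
      exact ⟨a, a.2, b, b.2, hab⟩
    · have := @h.1 (⟨a, ha⟩, ⟨b, hb⟩) (⟨a', ha'⟩, ⟨b', hb'⟩) hab
      exact congrArg (fun x => (x.1 : G)) this
  · rintro ⟨hST, hcancel⟩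
    refine ⟨fun ⟨a, b⟩ ⟨a', b'⟩ hab => ?_, fun g => ?_⟩
    · have ha := hcancel a a.2 b b.2 a' a'.2 b' b'.2 hab
      have hab : (a : G) + b = a' + b' := hab
      rw [ha] at hab
      exact Prod.ext (Subtype.ext ha) (Subtype.ext (add_left_cancel hab))
    · obtain ⟨a, ha, b, hb, hab⟩ := hST.symm ▸ Set.mem_univ g
      exact ⟨(⟨a, ha⟩, ⟨b, hb⟩), hab⟩

theorem IsComplement.isCoMinimalPair [AddCommGroup G] {S T : Set G} (h : IsComplement S T) :
    IsCoMinimalPair S T := by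
  obtain ⟨hST, hcancel⟩ := isComplement_iff_add_eq_univ_and_left_cancel.1 h
  refine ⟨hST, fun a ha hS => ?_, fun b hb hT => ?_⟩
  · obtain ⟨-, -, b, hb, -⟩ := hST.symm ▸ Set.mem_univ (0 : G)
    obtain ⟨a', ⟨ha', hne⟩, b', hb', hab⟩ := hS.symm ▸ Set.mem_univ (a + b)
    exact hne (hcancel a' ha' b' hb' a ha b hb hab)
  · obtain ⟨a, ha, -, -, -⟩ := hST.symm ▸ Set.mem_univ (0 : G)
    obtain ⟨a', ha', b', ⟨hb', hne⟩, hab⟩ := hT.symm ▸ Set.mem_univ (a + b)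
    have := hcancel a' ha' b' hb' a ha b hb hab
    exact hne (add_left_cancel (this ▸ hab))

theorem IsComplement.image_add_image_sub [AddCommGroup G] {S T : Set G} (h : IsComplement S T)
    (g : G) : IsComplement ((· + g) '' S) ((· - g) '' T) := by
  obtain ⟨hST, hcancel⟩ := isComplement_iff_add_eq_univ_and_left_cancel.1 h
  refine isComplement_iff_add_eq_univ_and_left_cancel.2 ⟨Set.eq_univ_of_forall fun x => ?_, ?_⟩
  · obtain ⟨a, ha, b, hb, hab⟩ := hST.symm ▸ Set.mem_univ x
    exact ⟨a + g, ⟨a, ha, rfl⟩, b - g, ⟨b, hb, rfl⟩, (add_add_sub_cancel a b g).trans hab⟩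
  · rintro _ ⟨a, ha, rfl⟩ _ ⟨b, hb, rfl⟩ _ ⟨a', ha', rfl⟩ _ ⟨b', hb', rfl⟩ hab
    rw [hcancel a ha b hb a' ha' b' hb' (by simpa using hab)]

theorem IsComplement.preimage_image [AddCommGroup G] {H : Type*} [AddCommGroup H]
    {π : G →+ H} {σ : H →+ G} (hπσ : ∀ h, π (σ h) = h) {S T : Set H} (h : IsComplement S T) :
    IsComplement (π ⁻¹' S) (σ '' T) := by
  obtain ⟨hST, hcancel⟩ := isComplement_iff_add_eq_univ_and_left_cancel.1 h
  refine isComplement_iff_add_eq_univ_and_left_cancel.2 ⟨Set.eq_univ_of_forall fun x => ?_, ?_⟩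
  · obtain ⟨a, ha, b, hb, hab⟩ := hST.symm ▸ Set.mem_univ (π x)
    refine ⟨x - σ b, ?_, σ b, ⟨b, hb, rfl⟩, sub_add_cancel x _⟩
    rwa [Set.mem_preimage, map_sub, hπσ, ← hab, add_sub_cancel_right]
  · rintro a ha _ ⟨b, hb, rfl⟩ a' ha' _ ⟨b', hb', rfl⟩ hab
    have hπ := congrArg π hab
    simp only [map_add, hπσ] at hπ
    have hb : b = b' := add_left_cancel ((hcancel _ ha b hb _ ha' b' hb' hπ) ▸ hπ)
    rw [hb] at hab
    exact add_right_cancel hab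

end AddSubgroup

open Finset

section SignedBinary

variable (ε : ℕ → ℤˣ)

def signedBinary (F : Finset ℕ) : ℤ := ∑ i ∈ F, (ε i : ℤ) * 2 ^ i

def signedBinaryMax (n : ℕ) : ℤ := ∑ i ∈ range n, max (ε i : ℤ) 0 * 2 ^ i

variable {ε}

theorem signedBinary_neg (F : Finset ℕ) : signedBinary (-ε) F = -signedBinary ε F := by
  simp [signedBinary, sum_neg_distrib]

theorem signedBinary_insert {F : Finset ℕ} {n : ℕ} (hn : n ∉ F) :
    signedBinary ε (insert n F) = ε n * 2 ^ n + signedBinary ε F :=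
  sum_insert hn

theorem signedBinary_le_signedBinaryMax {F : Finset ℕ} {n : ℕ} (hF : F ⊆ range n) :
    signedBinary ε F ≤ signedBinaryMax ε n :=
  calc signedBinary ε F ≤ ∑ i ∈ F, max (ε i : ℤ) 0 * 2 ^ i :=
        sum_le_sum fun i _ => by gcongr; exact le_max_left _ _
    _ ≤ signedBinaryMax ε n :=
        sum_le_sum_of_subset_of_nonneg hF fun i _ _ => by positivity

theorem signedBinaryMax_add_signedBinaryMax_neg (n : ℕ) :
    signedBinaryMax ε n + signedBinaryMax (-ε) n = 2 ^ n - 1 := by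
  have habs (i : ℕ) : |(ε i : ℤ)| = 1 := by
    rcases Int.units_eq_one_or (ε i) with h | h <;> simp [h]
  simp only [signedBinaryMax, ← sum_add_distrib, ← add_mul, Pi.neg_apply, Units.val_neg,
    max_zero_add_max_neg_zero_eq_abs_self, habs, one_mul]
  simpa using geom_sum_mul (2 : ℤ) n

theorem signedBinary_mem_Icc {F : Finset ℕ} {n : ℕ} (hF : F ⊆ range n) :
    signedBinary ε F ∈ Icc (-signedBinaryMax (-ε) n) (signedBinaryMax ε n) := by
  have := signedBinary_le_signedBinaryMax (ε := -ε) hF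
  rw [signedBinary_neg] at this
  exact mem_Icc.2 ⟨by linarith, signedBinary_le_signedBinaryMax hF⟩

theorem abs_signedBinary_sub_lt {F G : Finset ℕ} {n : ℕ} (hF : F ⊆ range n) (hG : G ⊆ range n) :
    |signedBinary ε F - signedBinary ε G| < 2 ^ n := by
  have hF' := mem_Icc.1 (signedBinary_mem_Icc (ε := ε) hF)
  have hG' := mem_Icc.1 (signedBinary_mem_Icc (ε := ε) hG)
  have := signedBinaryMax_add_signedBinaryMax_neg (ε := ε) n
  rw [abs_lt]
  constructor <;> linarith

theorem signedBinary_injOn_powerset_range (n : ℕ) :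
    Set.InjOn (signedBinary ε) (range n).powerset := by
  induction n with
  | zero => simp
  | succ n ih =>
    have hdisj : Disjoint ((range n).powerset : Set (Finset ℕ))
        ((range n).powerset.image (insert n) : Set (Finset ℕ)) := by
      simp only [coe_image, Set.disjoint_left, Set.mem_image, not_exists, not_and, mem_coe,
        mem_powerset]
      rintro F hF G - rfl
      exact (notMem_range_self) (hF (mem_insert_self n G))
    rw [range_add_one, powerset_insert, coe_union, Set.injOn_union hdisj]
    refine ⟨ih, ?_, ?_⟩
    · rw [coe_image]
      refine Set.InjOn.image_of_comp fun F hF G hG h => ih hF hG ?_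
      simp only [Function.comp_apply, mem_coe, mem_powerset] at hF hG h
      rwa [signedBinary_insert (fun h' => notMem_range_self (hF h')),
        signedBinary_insert (fun h' => notMem_range_self (hG h')), add_right_inj] at h
    · simp only [mem_coe, mem_powerset, coe_image, Set.mem_image]
      rintro F hF _ ⟨G, hG, rfl⟩ h
      rw [signedBinary_insert (fun h' => notMem_range_self (hG h'))] at h
      have := abs_signedBinary_sub_lt (ε := ε) hF hG
      rw [h, add_sub_cancel_right, abs_mul, abs_pow] at this
      rcases Int.units_eq_one_or (ε n) with h | h <;> simp [h] at this

theorem image_signedBinary_powerset_range (n : ℕ) :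
    (range n).powerset.image (signedBinary ε) =
      Icc (-signedBinaryMax (-ε) n) (signedBinaryMax ε n) := by
  refine eq_of_subset_of_card_le ?_ ?_
  · simp only [subset_iff, mem_image, mem_powerset]
    rintro _ ⟨F, hF, rfl⟩
    exact signedBinary_mem_Icc hF
  · rw [card_image_of_injOn (signedBinary_injOn_powerset_range n), card_powerset, card_range,
      Int.card_Icc, sub_neg_eq_add, add_assoc, add_comm 1, ← add_assoc,
      signedBinaryMax_add_signedBinaryMax_neg, sub_add_cancel]
    simp

theorem signedBinary_injective : Function.Injective (signedBinary ε) := by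
  intro F G h
  obtain ⟨n, hn⟩ := exists_nat_subset_range (F ∪ G)
  exact signedBinary_injOn_powerset_range n (mem_powerset.2 (union_subset_left hn))
    (mem_powerset.2 (union_subset_right hn)) h

theorem signedBinaryMax_mono : Monotone (signedBinaryMax ε) := fun m n hmn =>
  sum_le_sum_of_subset_of_nonneg (range_subset_range.2 hmn) fun i _ _ => by positivity

theorem exists_le_signedBinaryMax (hε : {i | ε i = 1}.Infinite) (z : ℤ) :
    ∃ n, z ≤ signedBinaryMax ε n := by
  obtain ⟨i, hi, hzi⟩ := hε.exists_gt z.toNat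
  refine ⟨i + 1, ?_⟩
  calc z ≤ z.toNat := Int.self_le_toNat z
    _ ≤ 2 ^ i := by exact_mod_cast (hzi.trans (Nat.lt_two_pow_self)).le
    _ = max (ε i : ℤ) 0 * 2 ^ i := by simp [hi.out]
    _ ≤ signedBinaryMax ε (i + 1) :=
        single_le_sum (f := fun j => max (ε j : ℤ) 0 * 2 ^ j) (fun j _ => by positivity)
          (self_mem_range_succ i)

theorem signedBinary_surjective (hpos : {i | ε i = 1}.Infinite) (hneg : {i | ε i = -1}.Infinite) :
    Function.Surjective (signedBinary ε) := by
  intro z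
  have hneg' : {i | (-ε) i = 1}.Infinite := by simpa [neg_eq_iff_eq_neg] using hneg
  obtain ⟨m, hm⟩ := exists_le_signedBinaryMax hpos z
  obtain ⟨m', hm'⟩ := exists_le_signedBinaryMax hneg' (-z)
  have hz : z ∈ Icc (-signedBinaryMax (-ε) (max m m')) (signedBinaryMax ε (max m m')) :=
    mem_Icc.2 ⟨by linarith [signedBinaryMax_mono (le_max_right m m') (ε := -ε)],
      hm.trans (signedBinaryMax_mono (le_max_left m m'))⟩
  rw [← image_signedBinary_powerset_range, mem_image] at hz
  obtain ⟨F, -, hF⟩ := hz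
  exact ⟨F, hF⟩

end SignedBinary

section SignedBinaryComplement

variable (ε : ℕ → ℤˣ)

def signedBinaryPos : Set ℤ := signedBinary ε '' {F | ∀ i ∈ F, ε i = 1}

def signedBinaryNeg : Set ℤ := signedBinary ε '' {F | ∀ i ∈ F, ε i = -1}

variable {ε}

theorem isComplement_signedBinaryPos_signedBinaryNeg (hpos : {i | ε i = 1}.Infinite)
    (hneg : {i | ε i = -1}.Infinite) :
    AddSubgroup.IsComplement (signedBinaryPos ε) (signedBinaryNeg ε) := by
  have hdisj {F G : Finset ℕ} (hF : ∀ i ∈ F, ε i = 1) (hG : ∀ i ∈ G, ε i = -1) :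
      Disjoint F G :=
    disjoint_left.2 fun i hiF hiG => by simpa [hF i hiF] using hG i hiG
  have hfilter {F G : Finset ℕ} (hF : ∀ i ∈ F, ε i = 1) (hG : ∀ i ∈ G, ε i = -1) :
      (F ∪ G).filter (ε · = 1) = F := by
    ext i
    simp only [mem_filter, mem_union]
    refine ⟨fun ⟨hi, hi1⟩ => hi.resolve_right fun hiG => ?_, fun hi => ⟨Or.inl hi, hF i hi⟩⟩
    simp [hG i hiG] at hi1
  refine AddSubgroup.isComplement_iff_add_eq_univ_and_left_cancel.2
    ⟨Set.eq_univ_of_forall fun z => ?_, ?_⟩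
  · obtain ⟨F, rfl⟩ := signedBinary_surjective hpos hneg z
    refine ⟨_, ⟨F.filter (ε · = 1), fun i hi => (mem_filter.1 hi).2, rfl⟩,
      _, ⟨F.filter (¬ε · = 1), fun i hi => ?_, rfl⟩, sum_filter_add_sum_filter_not _ _ _⟩
    exact (Int.units_eq_one_or (ε i)).resolve_left (mem_filter.1 hi).2
  · rintro _ ⟨F, hF, rfl⟩ _ ⟨G, hG, rfl⟩ _ ⟨F', hF', rfl⟩ _ ⟨G', hG', rfl⟩ h
    simp only [signedBinary, ← sum_union (hdisj hF hG), ← sum_union (hdisj hF' hG')] at h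
    rw [← hfilter hF hG, ← hfilter hF' hG', signedBinary_injective h]

theorem signedBinaryPos_nonneg {a : ℤ} (ha : a ∈ signedBinaryPos ε) : 0 ≤ a := by
  obtain ⟨F, hF, rfl⟩ := ha
  exact sum_nonneg fun i hi => by simp [hF i hi]

theorem signedBinaryNeg_nonpos {b : ℤ} (hb : b ∈ signedBinaryNeg ε) : b ≤ 0 := by
  obtain ⟨F, hF, rfl⟩ := hb
  exact sum_nonpos fun i hi => by simp [hF i hi]

theorem two_pow_mem_signedBinaryPos_iff (i : ℕ) : 2 ^ i ∈ signedBinaryPos ε ↔ ε i = 1 := by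
  refine ⟨fun ⟨F, hF, hFi⟩ => ?_, fun hi => ⟨{i}, by simpa using hi, by simp [signedBinary, hi]⟩⟩
  by_contra hi
  have hiF : i ∉ F := fun h => hi (hF i h)
  have h0 : signedBinary ε (insert i F) = signedBinary ε ∅ := by
    rw [signedBinary_insert hiF, hFi, (Int.units_eq_one_or (ε i)).resolve_left hi]
    simp [signedBinary]
  exact insert_ne_empty i F (signedBinary_injective h0)

theorem signedBinaryPos_injective : Function.Injective (signedBinaryPos) := by
  intro ε ε' h
  funext i
  have hi := two_pow_mem_signedBinaryPos_iff (ε := ε) i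
  rw [h, two_pow_mem_signedBinaryPos_iff] at hi
  rcases Int.units_eq_one_or (ε i) with h1 | h1 <;>
    rcases Int.units_eq_one_or (ε' i) with h2 | h2 <;> simp_all

end SignedBinaryComplement

open Classical in
noncomputable def pairedSigns (s : Set ℕ) (i : ℕ) : ℤˣ := if (Even i ↔ i / 2 ∈ s) then 1 else -1

theorem pairedSigns_two_mul_eq_one_iff (s : Set ℕ) (k : ℕ) : pairedSigns s (2 * k) = 1 ↔ k ∈ s := by
  by_cases hk : k ∈ s <;> simp [pairedSigns, hk]

theorem pairedSigns_two_mul_add_one (s : Set ℕ) (k : ℕ) :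
    pairedSigns s (2 * k + 1) = -pairedSigns s (2 * k) := by
  have : (2 * k + 1) / 2 = k := by omega
  by_cases hk : k ∈ s <;> simp [pairedSigns, hk, this]

theorem infinite_setOf_pairedSigns_eq (s : Set ℕ) (u : ℤˣ) :
    {i | pairedSigns s i = u}.Infinite := by
  refine Set.infinite_of_forall_exists_gt fun a => ?_
  by_cases h : pairedSigns s (2 * (a + 1)) = u
  · exact ⟨_, h, by omega⟩
  · refine ⟨2 * (a + 1) + 1, ?_, by omega⟩
    rcases Int.units_eq_one_or u with rfl | rfl <;>
      rcases Int.units_eq_one_or (pairedSigns s (2 * (a + 1))) with h' | h' <;>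
      simp_all [pairedSigns_two_mul_add_one]

theorem pairedSigns_injective : Function.Injective pairedSigns := fun s s' h =>
  Set.ext fun k => by rw [← pairedSigns_two_mul_eq_one_iff, h, pairedSigns_two_mul_eq_one_iff]

section Lex

variable {n : ℕ}

theorem toLex_lt_toLex_of_apply_zero_lt {β : Type*} [LT β] {x y : Fin (n + 1) → β}
    (h : x 0 < y 0) :
    toLex x < toLex y :=
  ⟨0, fun j hj => absurd hj (Fin.not_lt_zero j), h⟩

def lexHead (n : ℕ) : Zd (n + 1) →+ ℤ :=
  (Pi.evalAddMonoidHom (fun _ => ℤ) 0).comp (ofLexAddEquiv _).toAddMonoidHom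

def lexSingleHead (n : ℕ) : ℤ →+ Zd (n + 1) :=
  (toLexAddEquiv _).toAddMonoidHom.comp (AddMonoidHom.single (fun _ => ℤ) 0)

theorem lexHead_apply (x : Zd (n + 1)) : lexHead n x = ofLex x 0 := rfl

theorem lexSingleHead_apply (b : ℤ) : lexSingleHead n b = toLex (Pi.single 0 b) := rfl

theorem lexHead_lexSingleHead (b : ℤ) : lexHead n (lexSingleHead n b) = b := by
  rw [lexHead_apply, lexSingleHead_apply, ofLex_toLex, Pi.single_eq_same]

theorem pos_of_lexHead_pos {x : Zd (n + 1)} (h : 0 < lexHead n x) : 0 < x :=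
  toLex_lt_toLex_of_apply_zero_lt (x := 0) h

theorem lexSingleHead_neg {b : ℤ} (h : b < 0) : lexSingleHead n b < 0 := by
  rw [lexSingleHead_apply]
  exact toLex_lt_toLex_of_apply_zero_lt (y := 0) (by simpa using h)

end Lex

theorem isCoMinimalPair_signedBinary_lift (n : ℕ) (ε : ℕ → ℤˣ) (hpos : {i | ε i = 1}.Infinite)
    (hneg : {i | ε i = -1}.Infinite) :
    IsCoMinimalPair (lexHead n ⁻¹' ((· + 1) '' signedBinaryPos ε))
      (lexSingleHead n '' ((· - 1) '' signedBinaryNeg ε)) :=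
  (((isComplement_signedBinaryPos_signedBinaryNeg hpos hneg).image_add_image_sub 1).preimage_image
    lexHead_lexSingleHead).isCoMinimalPair

theorem not_countable_set_nat : ¬ Countable (Set ℕ) := fun _ =>
  have ⟨f, hf⟩ := Countable.exists_injective_nat (Set ℕ)
  Function.cantor_injective f hf

theorem stmt17 {d : ℕ} (hd : 0 < d) :
    ¬ {A : Set (Zd d) | A ⊆ {x : Zd d | (0 : Zd d) ≤ x} ∧
        ∃ B : Set (Zd d), B ⊆ {x : Zd d | ¬ (0 : Zd d) ≤ x} ∧
          IsCoMinimalPair A B}.Countable := by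
  obtain ⟨n, rfl⟩ : ∃ n, d = n + 1 := ⟨d - 1, by omega⟩
  intro hcount
  set A : Set ℕ → Set (Zd (n + 1)) := fun s =>
    lexHead n ⁻¹' ((· + 1) '' signedBinaryPos (pairedSigns s))
  have hA : Function.Injective A :=
    (Set.preimage_injective.2 fun z => ⟨lexSingleHead n z, lexHead_lexSingleHead z⟩).comp <|
      (Set.image_injective.2 (add_left_injective 1)).comp <|
        signedBinaryPos_injective.comp pairedSigns_injective
  refine not_countable_set_nat (Set.countable_univ_iff.1 ((hcount.preimage hA).mono fun s _ => ?_))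
  refine ⟨?_, _, ?_, isCoMinimalPair_signedBinary_lift n _ (infinite_setOf_pairedSigns_eq s 1)
    (infinite_setOf_pairedSigns_eq s (-1))⟩
  · rintro x ⟨a, ha, hx⟩
    exact (pos_of_lexHead_pos (by rw [← hx]; linarith [signedBinaryPos_nonneg ha])).le
  · rintro _ ⟨_, ⟨b, hb, rfl⟩, rfl⟩
    exact not_le.2 (lexSingleHead_neg (by linarith [signedBinaryNeg_nonpos hb]))
end

section
/- For every integer n ≥ 3, the set S = {n^k : k ≥ 0} ⊆ ℤ forms a co-minimal pair with some subset S' ⊆ ℤ, i.e., S + S' = ℤ, (S \ {s}) + S' ≠ ℤ for all s ∈ S, and S + (S' \ {s'}) ≠ ℤ for all s' ∈ S'. -/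
/-!
Build `S'` greedily along an enumeration of ℤ so that every integer is `n ^ k + s'` in exactly
one way; such a unique representation makes the pair co-minimal. An integer `m` not yet
represented is covered by the new element `m - n ^ (K + 1)` for `K` large: its translate of `S`
misses all earlier translates because, for `n ≥ 3`, a number `n ^ (K + 1) + n ^ a - n ^ j` is
either a power of `n` or exceeds `n ^ K` in absolute value.
-/

open Pointwise Set

section CoMinimal

variable {G : Type*} [Add G] {A B : Set G}

theorem diff_singleton_add_ne_univ_s18 (hAB : A + B = univ)
    (hinj : InjOn (fun p : G × G => p.1 + p.2) (A ×ˢ B)) {a : G} (ha : a ∈ A) :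
    (A \ {a}) + B ≠ univ := by
  obtain ⟨-, -, b, hb, -⟩ : a ∈ A + B := hAB ▸ mem_univ a
  intro h
  obtain ⟨a', ⟨ha', hne⟩, b', hb', heq⟩ : a + b ∈ (A \ {a}) + B := h ▸ mem_univ _
  exact hne (Prod.ext_iff.mp (hinj (mk_mem_prod ha' hb') (mk_mem_prod ha hb) heq)).1

theorem add_diff_singleton_ne_univ_s18 (hAB : A + B = univ)
    (hinj : InjOn (fun p : G × G => p.1 + p.2) (A ×ˢ B)) {b : G} (hb : b ∈ B) :
    A + (B \ {b}) ≠ univ := by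
  obtain ⟨a, ha, -, -, -⟩ : b ∈ A + B := hAB ▸ mem_univ b
  intro h
  obtain ⟨a', ha', b', ⟨hb', hne⟩, heq⟩ : a + b ∈ A + (B \ {b}) := h ▸ mem_univ _
  exact hne (Prod.ext_iff.mp (hinj (mk_mem_prod ha' hb') (mk_mem_prod ha hb) heq)).2

end CoMinimal

section GreedyComplement

variable {G : Type*} [AddCommGroup G] {A : Set G}

theorem injOn_add_of_pairwise_sub_notMem {B : Set G}
    (hB : B.Pairwise fun b b' => b - b' ∉ A - A) :
    InjOn (fun p : G × G => p.1 + p.2) (A ×ˢ B) := by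
  rintro ⟨a₁, b₁⟩ ⟨ha₁ : a₁ ∈ A, hb₁ : b₁ ∈ B⟩ ⟨a₂, b₂⟩ ⟨ha₂ : a₂ ∈ A, hb₂ : b₂ ∈ B⟩
    (heq : a₁ + b₁ = a₂ + b₂)
  obtain rfl : b₁ = b₂ := by
    by_contra hne
    refine hB hb₁ hb₂ hne (mem_sub.mpr ⟨a₂, ha₂, a₁, ha₁, ?_⟩)
    rw [sub_eq_sub_iff_add_eq_add, ← heq, add_comm]
  rw [add_right_cancel heq]

variable (hA : ∀ C : Finset G, (∀ c ∈ C, c ∉ A) → ∃ a ∈ A, ∀ c ∈ C, c - a ∉ A - A)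
include hA

theorem exists_superset_pairwise_sub_notMem_and_mem_add {B : Finset G}
    (hB : (B : Set G).Pairwise fun b b' => b - b' ∉ A - A) (m : G) :
    ∃ B' : Finset G, B ⊆ B' ∧ ((B' : Set G).Pairwise fun b b' => b - b' ∉ A - A) ∧
      m ∈ A + B' := by
  classical
  by_cases hm : m ∈ A + B
  · exact ⟨B, subset_rfl, hB, hm⟩
  obtain ⟨a, ha, hfar⟩ := hA (B.image (m - ·)) <| by
    simp only [Finset.mem_image]
    rintro _ ⟨b, hb, rfl⟩ hmb
    exact hm ⟨m - b, hmb, b, hb, sub_add_cancel m b⟩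
  refine ⟨insert (m - a) B, Finset.subset_insert _ _, ?_, ?_⟩
  · rw [Finset.coe_insert]
    refine hB.insert fun b hb _ => ?_
    have hmb : m - b - a ∉ A - A := hfar _ (Finset.mem_image_of_mem _ hb)
    refine ⟨by rwa [sub_right_comm], fun hsub => hmb ?_⟩
    obtain ⟨x, hx, y, hy, hxy⟩ := mem_sub.mp hsub
    refine mem_sub.mpr ⟨y, hy, x, hx, ?_⟩
    rw [← neg_sub x y, hxy]
    abel
  · exact ⟨a, ha, m - a, by simp, add_sub_cancel a m⟩

theorem exists_add_eq_univ_injOn [Countable G] :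
    ∃ B : Set G, A + B = univ ∧ InjOn (fun p : G × G => p.1 + p.2) (A ×ˢ B) := by
  obtain ⟨e, he⟩ := exists_surjective_nat G
  choose step hsub hsep hmem using fun (B : {B : Finset G // (B : Set G).Pairwise
    fun b b' => b - b' ∉ A - A}) m => exists_superset_pairwise_sub_notMem_and_mem_add hA B.2 m
  let seq : ℕ → {B : Finset G // (B : Set G).Pairwise fun b b' => b - b' ∉ A - A} :=
    fun i => Nat.rec ⟨∅, by simp⟩ (fun i B => ⟨step B (e i), hsep B (e i)⟩) i
  have hmono : Monotone fun i => ((seq i).1 : Set G) :=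
    monotone_nat_of_le_succ fun i => Finset.coe_subset.mpr (hsub (seq i) (e i))
  refine ⟨⋃ i, ((seq i).1 : Set G), eq_univ_of_forall fun m => ?_,
    injOn_add_of_pairwise_sub_notMem ((pairwise_iUnion hmono.directed_le).mpr fun i => (seq i).2)⟩
  obtain ⟨i, rfl⟩ := he m
  exact add_subset_add_left (subset_iUnion (fun i => ((seq i).1 : Set G)) (i + 1))
    (hmem (seq i) (e i))

end GreedyComplement

section Powers

variable {n : ℤ} (hn : 3 ≤ n)
include hn

theorem pow_lt_abs_pow_succ_add_pow_sub_pow {k a j : ℕ}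
    (h : ∀ i : ℕ, n ^ (k + 1) + n ^ a - n ^ j ≠ n ^ i) :
    n ^ k < |n ^ (k + 1) + n ^ a - n ^ j| := by
  have hn1 : 1 ≤ n := by linarith
  have hk : n ^ (k + 1) = n * n ^ k := pow_succ' n k
  have hkpos : 0 < n ^ k := pow_pos (by linarith) k
  have hapos : 0 < n ^ a := pow_pos (by linarith) a
  rcases lt_trichotomy j (k + 1) with hj | rfl | hj
  · have : n ^ j ≤ n ^ k := pow_le_pow_right₀ hn1 (by omega)
    exact lt_abs.mpr (Or.inl (by nlinarith))
  · exact absurd (by ring) (h a)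
  obtain ⟨i, rfl⟩ : ∃ i, j = i + 1 := ⟨j - 1, by omega⟩
  have hi : n ^ (i + 1) = n * n ^ i := pow_succ' n i
  rcases lt_trichotomy a (i + 1) with ha | rfl | ha
  · have hai : n ^ a ≤ n ^ i := pow_le_pow_right₀ hn1 (by omega)
    have hki : n ^ (k + 1) ≤ n ^ i := pow_le_pow_right₀ hn1 (by omega)
    exact lt_abs.mpr (Or.inr (by nlinarith))
  · exact absurd (by ring) (h (k + 1))
  · have : n ^ (i + 1) ≤ n ^ a := pow_le_pow_right₀ hn1 (by omega)
    exact lt_abs.mpr (Or.inl (by nlinarith))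

theorem exists_pow_forall_sub_notMem_sub (C : Finset ℤ)
    (hC : ∀ c ∈ C, c ∉ {m : ℤ | ∃ k : ℕ, m = n ^ k}) :
    ∃ a ∈ {m : ℤ | ∃ k : ℕ, m = n ^ k}, ∀ c ∈ C,
      c - a ∉ {m : ℤ | ∃ k : ℕ, m = n ^ k} - {m : ℤ | ∃ k : ℕ, m = n ^ k} := by
  obtain ⟨k, hk⟩ := pow_unbounded_of_one_lt (∑ c ∈ C, |c|) (by linarith : (1 : ℤ) < n)
  refine ⟨n ^ (k + 1), ⟨k + 1, rfl⟩, fun c hc hsub => ?_⟩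
  obtain ⟨x, ⟨a, hx⟩, y, ⟨j, hy⟩, hxy⟩ := mem_sub.mp hsub
  subst hx hy
  obtain rfl : c = n ^ (k + 1) + n ^ a - n ^ j := by linarith
  have hbound : |n ^ (k + 1) + n ^ a - n ^ j| ≤ ∑ c ∈ C, |c| :=
    Finset.single_le_sum (fun c _ => abs_nonneg c) hc
  have hlarge := pow_lt_abs_pow_succ_add_pow_sub_pow hn fun i hi => hC _ hc ⟨i, hi⟩
  linarith

end Powers

theorem stmt18 (n : ℤ) (hn : 3 ≤ n) :
    ∃ S' : Set ℤ, {m : ℤ | ∃ k : ℕ, m = n ^ k} + S' = Set.univ ∧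
      (∀ s ∈ {m : ℤ | ∃ k : ℕ, m = n ^ k},
        ({m : ℤ | ∃ k : ℕ, m = n ^ k} \ {s}) + S' ≠ Set.univ) ∧
      (∀ s' ∈ S',
        {m : ℤ | ∃ k : ℕ, m = n ^ k} + (S' \ {s'}) ≠ Set.univ) := by
  obtain ⟨S', hcover, hinj⟩ := exists_add_eq_univ_injOn (exists_pow_forall_sub_notMem_sub hn)
  exact ⟨S', hcover, fun _ hs => diff_singleton_add_ne_univ_s18 hcover hinj hs,
    fun _ hs' => add_diff_singleton_ne_univ_s18 hcover hinj hs'⟩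
end

section
/- The set S = {2^k + k : k ≥ 0} ⊆ ℤ forms a co-minimal pair with some subset S' ⊆ ℤ, i.e., S + S' = ℤ, (S \ {s}) + S' ≠ ℤ for all s ∈ S, and S + (S' \ {s'}) ≠ ℤ for all s' ∈ S'. -/
/-!
Write `s k = 2 ^ k + k`. The complement `T` consists of negative numbers of two kinds.

* `w k = -3 * 2 ^ (120 k + 60)`. Since `s` stays close to powers of two, it stays away from
  `3 * 2 ^ m`, so `x k = s k + w k` has no representation other than `s k + w k`; it witnesses
  the minimality of both `s k` and `w k`.
* Sort the integers into levels, level `i` being `2 ^ q (i - 1) < |v| ≤ 2 ^ q i` with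
  `q i = 120 i + 120`. A point `v` of level `i` that is neither some `x k` nor the witness of a
  point of level `i - 1` puts `t = v - s (q i + 24)` into `T`. Its witness is
  `v + shift i = s (q i + 40) + t`, a point of level `i + 1` that is excluded from that level
  and has no other representation.

All uniqueness claims come from comparing sizes: the exponents `q i + 24`, `q i + 40` and
`120 k + 60` are far apart modulo `120`. Every integer is an `x k`, a witness, or covered
within its own level.
-/

open Pointwise

theorem Set.diff_singleton_add_ne_univ {α : Type*} [Add α] {A B : Set α} {a n : α}
    (h : ∀ a' ∈ A, ∀ b ∈ B, a' + b = n → a' = a) : (A \ {a}) + B ≠ Set.univ := by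
  intro hU
  obtain ⟨a', ⟨ha', hne⟩, b, hb, hab⟩ := hU.symm ▸ Set.mem_univ n
  exact hne (h a' ha' b hb hab)

theorem Set.add_diff_singleton_ne_univ {α : Type*} [Add α] {A B : Set α} {b n : α}
    (h : ∀ a ∈ A, ∀ b' ∈ B, a + b' = n → b' = b) : A + (B \ {b}) ≠ Set.univ := by
  intro hU
  obtain ⟨a, ha, b', ⟨hb', hne⟩, hab⟩ := hU.symm ▸ Set.mem_univ n
  exact hne (h a ha b' hb' hab)

namespace TwoPowAddSelf

def s (k : ℕ) : ℤ := 2 ^ k + k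

lemma two_pow_le_s (k : ℕ) : (2 : ℤ) ^ k ≤ s k :=
  le_add_of_nonneg_right k.cast_nonneg

lemma s_pos (k : ℕ) : 0 < s k :=
  (pow_pos two_pos k).trans_le (two_pow_le_s k)

lemma s_lt_two_pow_succ (k : ℕ) : s k < 2 ^ (k + 1) := by
  have : (k : ℤ) < 2 ^ k := by exact_mod_cast Nat.lt_two_pow_self
  unfold s; rw [pow_succ]; linarith

lemma two_pow_lt_s_sub_s {j m k : ℕ} (hjm : j ≤ m) (hmk : m < k) :
    (2 : ℤ) ^ m < s k - s j := by
  have h1 : (2 : ℤ) ^ j ≤ 2 ^ m := pow_le_pow_right₀ one_le_two hjm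
  have h2 : (2 : ℤ) ^ (m + 1) ≤ 2 ^ k := pow_le_pow_right₀ one_le_two hmk
  have h3 : (j : ℤ) < k := by exact_mod_cast hjm.trans_lt hmk
  unfold s; rw [pow_succ] at h2; linarith

lemma s_strictMono : StrictMono s := fun j _ hjk =>
  sub_pos.1 ((pow_pos two_pos j).trans (two_pow_lt_s_sub_s le_rfl hjk))

lemma two_pow_le_two_mul_abs_s_sub_three_mul {m : ℕ} (hm : 3 ≤ m) (j : ℕ) :
    (2 : ℤ) ^ m ≤ 2 * |s j - 3 * 2 ^ m| := by
  obtain ⟨n, rfl⟩ : ∃ n, m = n + 2 := ⟨m - 2, by omega⟩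
  have hpow : (2 : ℤ) ^ (n + 2) = 4 * 2 ^ n := by ring
  rcases le_or_gt j (n + 3) with hj | hj
  · have h1 : s j ≤ s (n + 3) := s_strictMono.monotone hj
    have h2 : (n : ℤ) < 2 ^ n := by exact_mod_cast Nat.lt_two_pow_self
    have h3 : s (n + 3) = 8 * 2 ^ n + n + 3 := by unfold s; push_cast; ring
    have h4 : (1 : ℤ) ≤ n := by exact_mod_cast (by omega : 1 ≤ n)
    have := neg_abs_le (s j - 3 * 2 ^ (n + 2))
    linarith
  · have h1 : (2 : ℤ) ^ (n + 4) ≤ s j :=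
      (pow_le_pow_right₀ one_le_two hj).trans (two_pow_le_s j)
    have h2 : (2 : ℤ) ^ (n + 4) = 16 * 2 ^ n := by ring
    have := le_abs_self (s j - 3 * 2 ^ (n + 2))
    have := pow_pos (two_pos : (0 : ℤ) < 2) n
    linarith

lemma lt_add_three_of_two_pow_lt {a b : ℕ} (h : (2 : ℤ) ^ a < 8 * 2 ^ b) : a < b + 3 := by
  rw [show (8 : ℤ) * 2 ^ b = 2 ^ (b + 3) by ring] at h
  exact (pow_lt_pow_iff_right₀ one_lt_two).1 h

def q (i : ℕ) : ℕ := 120 * i + 120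

def w (k : ℕ) : ℤ := -(3 * 2 ^ (120 * k + 60))

def x (k : ℕ) : ℤ := s k + w k

lemma x_bounds (k : ℕ) : -(3 * 2 ^ (120 * k + 60)) < x k ∧ x k < -(2 * 2 ^ (120 * k + 60)) := by
  have h1 := s_pos k
  have h2 := s_lt_two_pow_succ k
  have h3 : (2 : ℤ) ^ (k + 1) ≤ 2 ^ (120 * k + 60) := pow_le_pow_right₀ one_le_two (by omega)
  unfold x w
  constructor <;> linarith

def InLevel (i : ℕ) (v : ℤ) : Prop := |v| ≤ 2 ^ q i ∧ ∀ i' < i, 2 ^ q i' < |v|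

lemma InLevel.unique {i i' : ℕ} {v : ℤ} (h : InLevel i v) (h' : InLevel i' v) : i = i' := by
  by_contra hne
  rcases Nat.lt_or_gt_of_ne hne with hlt | hlt
  · exact (h'.2 i hlt).not_ge h.1
  · exact (h.2 i' hlt).not_ge h'.1

lemma exists_inLevel (v : ℤ) : ∃ i, InLevel i v := by
  have hex : ∃ i, |v| ≤ 2 ^ q i := by
    refine ⟨v.natAbs, ?_⟩
    have h1 : (v.natAbs : ℤ) < 2 ^ v.natAbs := by exact_mod_cast Nat.lt_two_pow_self
    have h2 : (2 : ℤ) ^ v.natAbs ≤ 2 ^ q v.natAbs :=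
      pow_le_pow_right₀ one_le_two (by unfold q; omega)
    rw [Int.abs_eq_natAbs]; linarith
  exact ⟨Nat.find hex, Nat.find_spec hex, fun i' hi' => not_le.1 (Nat.find_min hex hi')⟩

def shift (i : ℕ) : ℤ := s (q i + 40) - s (q i + 24)

lemma shift_eq (i : ℕ) : shift i = (2 ^ 40 - 2 ^ 24) * 2 ^ q i + 16 := by
  unfold shift s; push_cast; ring

lemma sixteen_le_two_pow_q (i : ℕ) : (16 : ℤ) ≤ 2 ^ q i :=
  le_trans (by norm_num) (pow_le_pow_right₀ one_le_two (by unfold q; omega : 4 ≤ q i))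

lemma add_shift_bounds {i : ℕ} {v : ℤ} (hv : |v| ≤ 2 ^ q i) :
    (2 ^ 40 - 2 ^ 25) * 2 ^ q i < v + shift i ∧ v + shift i < (2 ^ 40 - 2 ^ 23) * 2 ^ q i := by
  have := abs_le.1 hv
  have := sixteen_le_two_pow_q i
  rw [shift_eq]
  constructor <;> linarith

lemma InLevel.add_shift {i : ℕ} {v : ℤ} (hv : InLevel i v) : InLevel (i + 1) (v + shift i) := by
  have hD := add_shift_bounds hv.1
  have hu := pow_pos (two_pos : (0 : ℤ) < 2) (q i)
  have hq : (2 : ℤ) ^ q (i + 1) = 2 ^ 120 * 2 ^ q i := by unfold q; ring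
  rw [InLevel, abs_of_pos (by linarith)]
  refine ⟨by rw [hq]; linarith, fun i' hi' => ?_⟩
  have : (2 : ℤ) ^ q i' ≤ 2 ^ q i := pow_le_pow_right₀ one_le_two (by unfold q; omega)
  linarith

def V : ℕ → Set ℤ
  | 0 => {v | InLevel 0 v ∧ v ∉ Set.range x}
  | i + 1 => {v | InLevel (i + 1) v ∧ v ∉ Set.range x ∧ v - shift i ∉ V i}

lemma V_subset (i : ℕ) : V i ⊆ {v | InLevel i v ∧ v ∉ Set.range x} := by
  cases i
  · exact fun _ hv => hv
  · exact fun _ hv => ⟨hv.1, hv.2.1⟩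

lemma add_shift_not_mem_V {i : ℕ} {u : ℤ} (hu : u ∈ V i) : u + shift i ∉ V (i + 1) :=
  fun h => h.2.2 (by simpa using hu)

lemma mem_V {i : ℕ} {v : ℤ} (hv : InLevel i v) (hx : v ∉ Set.range x)
    (hprev : ∀ i', i = i' + 1 → v - shift i' ∉ V i') : v ∈ V i := by
  cases i
  · exact ⟨hv, hx⟩
  · exact ⟨hv, hx, hprev _ rfl⟩

def T : Set ℤ := {t | ∃ i, t + s (q i + 24) ∈ V i} ∪ Set.range w

lemma neg_of_mem_T {t : ℤ} (ht : t ∈ T) : t < 0 := by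
  rcases ht with ⟨i, hi⟩ | ⟨k, rfl⟩
  · have h1 := (abs_le.1 (V_subset i hi).1.1).2
    have h2 := two_pow_le_s (q i + 24)
    have h3 : (2 : ℤ) ^ (q i + 24) = 2 ^ 24 * 2 ^ q i := by ring
    have := pow_pos (two_pos : (0 : ℤ) < 2) (q i)
    linarith
  · have := pow_pos (two_pos : (0 : ℤ) < 2) (120 * k + 60)
    unfold w; linarith

lemma exists_s_add_eq (n : ℤ) : ∃ j, ∃ t ∈ T, s j + t = n := by
  by_cases hx : n ∈ Set.range x
  · obtain ⟨k, rfl⟩ := hx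
    exact ⟨k, w k, Or.inr ⟨k, rfl⟩, rfl⟩
  obtain ⟨i, hi⟩ := exists_inLevel n
  by_cases hprev : ∃ i', i = i' + 1 ∧ n - shift i' ∈ V i'
  · obtain ⟨i', -, hn⟩ := hprev
    exact ⟨q i' + 40, n - shift i' - s (q i' + 24), Or.inl ⟨i', by simpa using hn⟩,
      by unfold shift; ring⟩
  · have hn : n ∈ V i := mem_V hi hx fun i' hi' hn => hprev ⟨i', hi', hn⟩
    exact ⟨q i + 24, n - s (q i + 24), Or.inl ⟨i, by simpa using hn⟩, by ring⟩

lemma eq_of_s_add_w_eq_x {j k k' : ℕ} (h : s j + w k' = x k) : j = k ∧ k' = k := by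
  obtain ⟨hxl, hxu⟩ := x_bounds k
  have hj := two_pow_le_two_mul_abs_s_sub_three_mul (m := 120 * k' + 60) (by omega) j
  have hk := two_pow_le_two_mul_abs_s_sub_three_mul (m := 120 * k + 60) (by omega) k
  have hsj : s j - 3 * 2 ^ (120 * k' + 60) = x k := by unfold w at h; linarith
  have hsk : s k - 3 * 2 ^ (120 * k + 60) = x k := by unfold x w; ring
  rw [hsj, abs_of_neg (by linarith)] at hj
  rw [hsk, abs_of_neg (by linarith)] at hk
  have := s_pos j
  have h1 := lt_add_three_of_two_pow_lt (a := 120 * k' + 60) (b := 120 * k + 60) (by linarith)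
  have h2 := lt_add_three_of_two_pow_lt (a := 120 * k + 60) (b := 120 * k' + 60) (by linarith)
  obtain rfl : k' = k := by omega
  exact ⟨s_strictMono.injective (by linarith), rfl⟩

lemma s_add_ne_x_of_mem_V {i j k : ℕ} {t : ℤ} (ht : t + s (q i + 24) ∈ V i) :
    s j + t ≠ x k := by
  intro h
  obtain ⟨hlev, hx⟩ := V_subset i ht
  have hv := abs_le.1 hlev.1
  obtain ⟨hxl, hxu⟩ := x_bounds k
  have hu := pow_pos (two_pos : (0 : ℤ) < 2) (q i)
  rcases lt_trichotomy j (q i + 24) with hj | rfl | hj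
  · have h1 := two_pow_lt_s_sub_s (j := j) (m := q i + 23) (k := q i + 24) (by omega) (by omega)
    have h2 := s_lt_two_pow_succ (q i + 24)
    have h3 := s_pos j
    rw [show (2 : ℤ) ^ (q i + 23) = 2 ^ 23 * 2 ^ q i by ring] at h1
    rw [show (2 : ℤ) ^ (q i + 24 + 1) = 2 ^ 25 * 2 ^ q i by ring] at h2
    rcases (by unfold q; omega : q i + 60 ≤ 120 * k + 60 ∨ 120 * k + 60 ≤ q i) with hk | hk
    · have h4 : (2 : ℤ) ^ (q i + 60) ≤ 2 ^ (120 * k + 60) := pow_le_pow_right₀ one_le_two hk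
      rw [show (2 : ℤ) ^ (q i + 60) = 2 ^ 60 * 2 ^ q i by ring] at h4
      linarith
    · have h4 : (2 : ℤ) ^ (120 * k + 60) ≤ 2 ^ q i := pow_le_pow_right₀ one_le_two hk
      linarith
  · exact hx ⟨k, by linarith⟩
  · have h1 := two_pow_lt_s_sub_s le_rfl hj
    rw [show (2 : ℤ) ^ (q i + 24) = 2 ^ 24 * 2 ^ q i by ring] at h1
    linarith

lemma eq_of_s_add_eq_x {j k : ℕ} {t : ℤ} (ht : t ∈ T) (h : s j + t = x k) :
    j = k ∧ t = w k := by
  rcases ht with ⟨i, hi⟩ | ⟨k', rfl⟩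
  · exact absurd h (s_add_ne_x_of_mem_V hi)
  · obtain ⟨rfl, rfl⟩ := eq_of_s_add_w_eq_x h
    exact ⟨rfl, rfl⟩

lemma s_add_w_ne_add_shift {i j k : ℕ} {v : ℤ} (hv : |v| ≤ 2 ^ q i) (hj : q i + 40 < j) :
    s j + w k ≠ v + shift i := by
  intro h
  obtain ⟨hDl, hDu⟩ := add_shift_bounds hv
  have hD : s j - 3 * 2 ^ (120 * k + 60) = v + shift i := by unfold w at h; linarith
  have hk := two_pow_le_two_mul_abs_s_sub_three_mul (m := 120 * k + 60) (by omega) j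
  have hu := pow_pos (two_pos : (0 : ℤ) < 2) (q i)
  rw [hD, abs_of_pos (by linarith)] at hk
  have hk' := lt_add_three_of_two_pow_lt (a := 120 * k + 60) (b := q i + 38)
    (by rw [show (2 : ℤ) ^ (q i + 38) = 2 ^ 38 * 2 ^ q i by ring]; linarith)
  have h1 : (2 : ℤ) ^ (120 * k + 60) ≤ 2 ^ q i :=
    pow_le_pow_right₀ one_le_two (by unfold q at hk' ⊢; omega)
  have h2 : (2 : ℤ) ^ (q i + 41) ≤ s j :=
    (pow_le_pow_right₀ one_le_two (by omega)).trans (two_pow_le_s j)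
  rw [show (2 : ℤ) ^ (q i + 41) = 2 ^ 41 * 2 ^ q i by ring] at h2
  linarith

lemma s_add_ne_add_shift_of_mem_V {i i' j : ℕ} {v t : ℤ} (hv : v ∈ V i)
    (ht : t + s (q i' + 24) ∈ V i') (hj : q i + 40 < j) : s j + t ≠ v + shift i := by
  intro h
  have hlev := (V_subset i hv).1
  have hlev' := (V_subset i' ht).1
  obtain ⟨hDl, hDu⟩ := add_shift_bounds hlev.1
  have hv' := abs_le.1 hlev'.1
  have hu := pow_pos (two_pos : (0 : ℤ) < 2) (q i)
  have hu' := pow_pos (two_pos : (0 : ℤ) < 2) (q i')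
  rcases lt_trichotomy j (q i' + 24) with hjJ | rfl | hjJ
  · have h1 := two_pow_lt_s_sub_s (j := j) (m := q i' + 23) (k := q i' + 24) (by omega) (by omega)
    rw [show (2 : ℤ) ^ (q i' + 23) = 2 ^ 23 * 2 ^ q i' by ring] at h1
    linarith
  · have hmem : v + shift i ∈ V i' := by rwa [← h, add_comm]
    obtain rfl := ((V_subset i' hmem).1.unique hlev.add_shift)
    exact add_shift_not_mem_V hv hmem
  · rcases le_or_gt i' i with hi | hi
    · have h1 := two_pow_le_s j
      have h2 := s_lt_two_pow_succ (q i' + 24)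
      have h3 : (2 : ℤ) ^ (q i + 41) ≤ 2 ^ j := pow_le_pow_right₀ one_le_two (by omega)
      have h4 : (2 : ℤ) ^ (q i' + 24 + 1) ≤ 2 ^ (q i + 25) :=
        pow_le_pow_right₀ one_le_two (by unfold q; omega)
      have h5 : (2 : ℤ) ^ q i' ≤ 2 ^ q i := pow_le_pow_right₀ one_le_two (by unfold q; omega)
      rw [show (2 : ℤ) ^ (q i + 41) = 2 ^ 41 * 2 ^ q i by ring] at h3
      rw [show (2 : ℤ) ^ (q i + 25) = 2 ^ 25 * 2 ^ q i by ring] at h4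
      linarith
    · have h1 := two_pow_lt_s_sub_s le_rfl hjJ
      have h2 : (2 : ℤ) ^ (q i + 40) ≤ 2 ^ q i' :=
        pow_le_pow_right₀ one_le_two (by unfold q; omega)
      rw [show (2 : ℤ) ^ (q i' + 24) = 2 ^ 24 * 2 ^ q i' by ring] at h1
      rw [show (2 : ℤ) ^ (q i + 40) = 2 ^ 40 * 2 ^ q i by ring] at h2
      linarith

lemma eq_of_s_add_eq_add_shift {i j : ℕ} {v t : ℤ} (hv : v ∈ V i) (ht : t ∈ T)
    (h : s j + t = v + shift i) : j = q i + 40 ∧ t = v - s (q i + 24) := by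
  have hlev := (V_subset i hv).1
  have hj : q i + 39 < j := by
    refine s_strictMono.lt_iff_lt.1 ?_
    have h1 := neg_of_mem_T ht
    have h2 := (add_shift_bounds hlev.1).1
    have h3 : ((q i : ℕ) : ℤ) < 2 ^ q i := by exact_mod_cast Nat.lt_two_pow_self
    have h4 : (39 : ℤ) ≤ q i := by unfold q; push_cast; omega
    have h5 : s (q i + 39) = 2 ^ 39 * 2 ^ q i + q i + 39 := by unfold s; push_cast; ring
    linarith
  rcases (by omega : j = q i + 40 ∨ q i + 40 < j) with rfl | hj
  · exact ⟨rfl, by unfold shift at h; linarith⟩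
  · rcases ht with ⟨i', hi'⟩ | ⟨k, rfl⟩
    · exact absurd h (s_add_ne_add_shift_of_mem_V hv hi' hj)
    · exact absurd h (s_add_w_ne_add_shift hlev.1 hj)

end TwoPowAddSelf

open TwoPowAddSelf in
theorem stmt19 :
    ∃ S' : Set ℤ, {m : ℤ | ∃ k : ℕ, m = 2 ^ k + k} + S' = Set.univ ∧
      (∀ s ∈ {m : ℤ | ∃ k : ℕ, m = 2 ^ k + k},
        ({m : ℤ | ∃ k : ℕ, m = 2 ^ k + k} \ {s}) + S' ≠ Set.univ) ∧
      (∀ s' ∈ S',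
        {m : ℤ | ∃ k : ℕ, m = 2 ^ k + k} + (S' \ {s'}) ≠ Set.univ) := by
  have hS : {m : ℤ | ∃ k : ℕ, m = 2 ^ k + k} = Set.range s := by
    ext m; exact ⟨fun ⟨k, hk⟩ => ⟨k, hk.symm⟩, fun ⟨k, hk⟩ => ⟨k, hk.symm⟩⟩
  rw [hS]
  refine ⟨T, Set.eq_univ_of_forall fun n => ?_, ?_, ?_⟩
  · obtain ⟨j, t, ht, rfl⟩ := exists_s_add_eq n
    exact Set.add_mem_add ⟨j, rfl⟩ ht
  · rintro _ ⟨k, rfl⟩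
    refine Set.diff_singleton_add_ne_univ (n := x k) ?_
    rintro _ ⟨j, rfl⟩ t ht h
    rw [(eq_of_s_add_eq_x ht h).1]
  · rintro t (⟨i, hi⟩ | ⟨k, rfl⟩)
    · refine Set.add_diff_singleton_ne_univ (n := t + s (q i + 24) + shift i) ?_
      rintro _ ⟨j, rfl⟩ t' ht' h
      simpa using (eq_of_s_add_eq_add_shift hi ht' h).2
    · refine Set.add_diff_singleton_ne_univ (n := x k) ?_
      rintro _ ⟨j, rfl⟩ t' ht' h
      exact (eq_of_s_add_eq_x ht' h).2
end
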